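/- arXiv:1004.2446 — 10 statements merged into one kernel-verified Lean document; each statement's English description precedes it below -/
import Mathlib

section
/- Let {f_i}_{i∈S} be a Parseval frame for a Hilbert space H and P an orthogonal projection on H. Then the Gram matrices G = (⟨f_j, f_i⟩), R = (⟨Pf_j, Pf_i⟩) and Q = (⟨(I−P)f_j, (I−P)f_i⟩) are all projection operators on ℓ²(S) and G = R + Q. -/
/-!
By Parseval, the analysis operator `V x = (⟪f i, x⟫)ᵢ` is an isometry `H → ℓ²(S)`, so `V† V = 1`,
and `V† eⱼ = f j`. Hence `V W V†` has matrix entries `⟪W (f j), f i⟫`, which identifies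
`G = V V†`, `R = V P V†` and `Q = V (1 - P) V†` (for an orthogonal projection `W`,
`⟪W x, W y⟫ = ⟪W x, y⟫`). Conjugating an orthogonal projection by an isometry gives an orthogonal
projection, and `G = R + Q` because `P + (1 - P) = 1`.
-/

open scoped InnerProductSpace lp
open ContinuousLinearMap

section

variable {𝕜 E F : Type*} [RCLike 𝕜] [NormedAddCommGroup E] [InnerProductSpace 𝕜 E]
  [CompleteSpace E] [NormedAddCommGroup F] [InnerProductSpace 𝕜 F] [CompleteSpace F]

theorem IsStarProjection.comp_comp_adjoint_of_adjoint_comp_self {V : E →L[𝕜] F}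
    (hV : adjoint V ∘L V = 1) {W : E →L[𝕜] E} (hW : IsStarProjection W) :
    IsStarProjection (V ∘L W ∘L adjoint V) where
  isIdempotentElem := by
    calc (V ∘L W ∘L adjoint V) ∘L (V ∘L W ∘L adjoint V)
        = V ∘L W ∘L (adjoint V ∘L V) ∘L W ∘L adjoint V := by simp only [comp_assoc]
      _ = V ∘L (W * W) ∘L adjoint V := by rw [hV]; rfl
      _ = V ∘L W ∘L adjoint V := by rw [hW.isIdempotentElem.eq]
  isSelfAdjoint := by
    rw [isSelfAdjoint_iff', adjoint_comp, adjoint_comp, adjoint_adjoint,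
      isSelfAdjoint_iff'.mp hW.isSelfAdjoint, comp_assoc]

theorem IsStarProjection.inner_apply_apply {P : E →L[𝕜] E} (hP : IsStarProjection P)
    (x y : E) : ⟪P x, P y⟫_𝕜 = ⟪P x, y⟫_𝕜 := by
  rw [← adjoint_inner_left, isSelfAdjoint_iff'.mp hP.isSelfAdjoint]
  change ⟪(P * P) x, y⟫_𝕜 = _
  rw [hP.isIdempotentElem.eq]

end

namespace lp

variable {𝕜 S : Type*} [RCLike 𝕜] [DecidableEq S]

theorem ext_inner_single {x y : ℓ²(S, 𝕜)}
    (h : ∀ i, ⟪x, lp.single 2 i 1⟫_𝕜 = ⟪y, lp.single 2 i 1⟫_𝕜) : x = y := by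
  ext i
  simpa [lp.inner_single_right] using congrArg (starRingEnd 𝕜) (h i)

theorem ext_continuousLinearMap_inner_single {T T' : ℓ²(S, 𝕜) →L[𝕜] ℓ²(S, 𝕜)}
    (h : ∀ i j, ⟪T (lp.single 2 j 1), lp.single 2 i 1⟫_𝕜 =
      ⟪T' (lp.single 2 j 1), lp.single 2 i 1⟫_𝕜) :
    T = T' := by
  refine lp.ext_continuousLinearMap ENNReal.ofNat_ne_top fun j =>
    ContinuousLinearMap.ext fun a => ?_
  have hsingle : lp.single 2 j a = a • lp.single (E := fun _ : S => 𝕜) 2 j 1 := by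
    rw [← lp.single_smul, smul_eq_mul, mul_one]
  simp only [comp_apply, singleContinuousLinearMap_apply, hsingle, map_smul]
  rw [ext_inner_single (h · j)]

end lp

variable (𝕜) in
def IsParsevalFrame {S H : Type*} [RCLike 𝕜] [NormedAddCommGroup H] [InnerProductSpace 𝕜 H]
    (f : S → H) : Prop :=
  ∀ x : H, ∑' i : S, ‖⟪x, f i⟫_𝕜‖ ^ 2 = ‖x‖ ^ 2

namespace IsParsevalFrame

variable {𝕜 S H : Type*} [RCLike 𝕜] [NormedAddCommGroup H] [InnerProductSpace 𝕜 H]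
  {f : S → H}

/- Summability is not part of the definition: a non-summable `tsum` is `0`, which forces `x = 0`. -/
theorem summable (hf : IsParsevalFrame 𝕜 f) (x : H) :
    Summable fun i => ‖⟪x, f i⟫_𝕜‖ ^ 2 := by
  by_contra hs
  have hx : x = 0 := by simpa [tsum_eq_zero_of_not_summable hs] using (hf x).symm
  simp [hx] at hs

theorem memℓp (hf : IsParsevalFrame 𝕜 f) (x : H) : Memℓp (fun i => ⟪f i, x⟫_𝕜) 2 :=
  memℓp_gen <| by simpa [norm_inner_symm] using hf.summable x

variable (hf : IsParsevalFrame 𝕜 f)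

def analysisOp : H →ₗᵢ[𝕜] ℓ²(S, 𝕜) where
  toFun x := ⟨fun i => ⟪f i, x⟫_𝕜, hf.memℓp x⟩
  map_add' x y := by ext i; exact inner_add_right _ _ _
  map_smul' c x := by ext i; simp [inner_smul_right]
  norm_map' x := by
    refine (pow_left_inj₀ (norm_nonneg _) (norm_nonneg x) two_ne_zero).mp ?_
    have := lp.norm_rpow_eq_tsum (p := 2) (by norm_num)
      ⟨fun i => ⟪f i, x⟫_𝕜, hf.memℓp x⟩
    simp only [ENNReal.toReal_ofNat, Real.rpow_two] at this
    simp only [LinearMap.coe_mk, AddHom.coe_mk, this, norm_inner_symm, hf x]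

theorem adjoint_comp_analysisOp [CompleteSpace H] :
    adjoint hf.analysisOp.toContinuousLinearMap ∘L hf.analysisOp.toContinuousLinearMap = 1 :=
  (isometry_iff_adjoint_comp_self _).mp hf.analysisOp.isometry

@[simp]
theorem analysisOp_apply (x : H) (i : S) : (hf.analysisOp x : S → 𝕜) i = ⟪f i, x⟫_𝕜 := rfl

variable [DecidableEq S]

theorem inner_analysisOp_single (x : H) (i : S) :
    ⟪hf.analysisOp x, lp.single 2 i 1⟫_𝕜 = ⟪x, f i⟫_𝕜 := by
  simp [lp.inner_single_right]

theorem adjoint_analysisOp_single [CompleteSpace H] (j : S) :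
    adjoint hf.analysisOp.toContinuousLinearMap (lp.single 2 j 1) = f j :=
  ext_inner_right 𝕜 fun x => by simp [adjoint_inner_left, lp.inner_single_left]

theorem inner_comp_comp_adjoint_single [CompleteSpace H] (T : H →L[𝕜] H) (i j : S) :
    ⟪(hf.analysisOp.toContinuousLinearMap ∘L T ∘L adjoint hf.analysisOp.toContinuousLinearMap)
        (lp.single 2 j 1), lp.single 2 i 1⟫_𝕜 = ⟪T (f j), f i⟫_𝕜 := by
  simp only [comp_apply, adjoint_analysisOp_single, LinearIsometry.coe_toContinuousLinearMap,
    inner_analysisOp_single]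

end IsParsevalFrame

/-- For a Parseval frame `{f i}` on a Hilbert space `H` and an orthogonal
projection `P`, the Gram matrices `G = (⟪f j, f i⟫)`, `R = (⟪P f j, P f i⟫)` and
`Q = (⟪(I-P) f j, (I-P) f i⟫)` are projection operators on `ℓ²(S)` and `G = R + Q`. -/
theorem gram_projections_add
    {S : Type*} [DecidableEq S] {H : Type*} [NormedAddCommGroup H]
    [InnerProductSpace ℂ H] [CompleteSpace H]
    (f : S → H) (hParseval : ∀ x : H, ∑' i : S, ‖⟪x, f i⟫_ℂ‖ ^ 2 = ‖x‖ ^ 2)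
    (P : H →L[ℂ] H) (hPidem : IsIdempotentElem P) (hPsa : IsSelfAdjoint P)
    (G R Q : lp (fun _ : S => ℂ) 2 →L[ℂ] lp (fun _ : S => ℂ) 2)
    (hG : ∀ i j : S, ⟪G (lp.single 2 j 1), lp.single 2 i 1⟫_ℂ = ⟪f j, f i⟫_ℂ)
    (hR : ∀ i j : S, ⟪R (lp.single 2 j 1), lp.single 2 i 1⟫_ℂ = ⟪P (f j), P (f i)⟫_ℂ)
    (hQ : ∀ i j : S, ⟪Q (lp.single 2 j 1), lp.single 2 i 1⟫_ℂ
        = ⟪((1 : H →L[ℂ] H) - P) (f j), ((1 : H →L[ℂ] H) - P) (f i)⟫_ℂ) :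
    (IsIdempotentElem G ∧ IsSelfAdjoint G) ∧
    (IsIdempotentElem R ∧ IsSelfAdjoint R) ∧
    (IsIdempotentElem Q ∧ IsSelfAdjoint Q) ∧
    G = R + Q := by
  have hf : IsParsevalFrame ℂ f := hParseval
  set V := hf.analysisOp.toContinuousLinearMap
  have hP : IsStarProjection P := ⟨hPidem, hPsa⟩
  have hG' : G = V ∘L 1 ∘L adjoint V :=
    lp.ext_continuousLinearMap_inner_single fun i j => by
      rw [hG, hf.inner_comp_comp_adjoint_single, one_apply_eq_self]
  have hR' : R = V ∘L P ∘L adjoint V :=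
    lp.ext_continuousLinearMap_inner_single fun i j => by
      rw [hR, hf.inner_comp_comp_adjoint_single, hP.inner_apply_apply]
  have hQ' : Q = V ∘L (1 - P) ∘L adjoint V :=
    lp.ext_continuousLinearMap_inner_single fun i j => by
      rw [hQ, hf.inner_comp_comp_adjoint_single, hP.one_sub.inner_apply_apply]
  have hconj (W : H →L[ℂ] H) (hW : IsStarProjection W) :
      IsStarProjection (V ∘L W ∘L adjoint V) :=
    hW.comp_comp_adjoint_of_adjoint_comp_self hf.adjoint_comp_analysisOp
  refine ⟨(isStarProjection_iff _).mp ?_, (isStarProjection_iff _).mp ?_,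
    (isStarProjection_iff _).mp ?_, ?_⟩
  · exact hG' ▸ hconj 1 (.one _)
  · exact hR' ▸ hconj P hP
  · exact hQ' ▸ hconj (1 - P) hP.one_sub
  · rw [hG', hR', hQ', ← comp_add, ← add_comp, add_sub_cancel]
end

section
/- Let {f_i}_{i∈S} be a Parseval frame for a Hilbert space H with Gram matrix G = (⟨f_j, f_i⟩)_{i,j∈S}, and let B ⊆ S. Then the closed linear span of {f_i : i ∈ B} equals H if and only if 1 is not an eigenvalue of the compression D_{B^c} G D_{B^c}. -/
set_option linter.unusedSectionVars false

open scoped InnerProductSpace ENNReal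

namespace FrameCompressionAux

variable {S : Type*} [DecidableEq S] {H : Type*} [NormedAddCommGroup H]
  [InnerProductSpace ℂ H] [CompleteSpace H]

lemma norm_sq_eq (v : lp (fun _ : S => ℂ) 2) : ‖v‖ ^ 2 = ∑' i, ‖v i‖ ^ 2 := by
  have h := lp.norm_rpow_eq_tsum (p := 2) (by norm_num) v
  have h2 : ((2 : ℝ≥0∞)).toReal = ((2 : ℕ) : ℝ) := by norm_num
  rw [h2] at h
  simp_rw [Real.rpow_natCast] at h
  exact_mod_cast h

lemma summable_sq {f : S → H}
    (hP : ∀ x : H, ∑' i : S, ‖⟪x, f i⟫_ℂ‖ ^ 2 = ‖x‖ ^ 2) (x : H) :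
    Summable fun i => ‖⟪x, f i⟫_ℂ‖ ^ 2 := by
  by_cases hx : x = 0
  · subst hx
    convert summable_zero with i
    simp
  · by_contra h
    have h0 := hP x
    rw [tsum_eq_zero_of_not_summable h] at h0
    have : ‖x‖ = 0 := by nlinarith [norm_nonneg x]
    exact hx (norm_eq_zero.mp this)

lemma memV {f : S → H}
    (hP : ∀ x : H, ∑' i : S, ‖⟪x, f i⟫_ℂ‖ ^ 2 = ‖x‖ ^ 2) (x : H) :
    Memℓp (fun i => ⟪f i, x⟫_ℂ) 2 := by
  apply memℓp_gen
  have h2 : ((2 : ℝ≥0∞)).toReal = ((2 : ℕ) : ℝ) := by norm_num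
  rw [h2]
  simp_rw [Real.rpow_natCast]
  have := summable_sq hP x
  simp_rw [norm_inner_symm x] at this
  exact this

noncomputable def Vli (f : S → H)
    (hP : ∀ x : H, ∑' i : S, ‖⟪x, f i⟫_ℂ‖ ^ 2 = ‖x‖ ^ 2) :
    H →ₗᵢ[ℂ] lp (fun _ : S => ℂ) 2 where
  toFun x := ⟨fun i => ⟪f i, x⟫_ℂ, memV hP x⟩
  map_add' x y := by
    apply lp.ext
    funext i
    simp only [lp.coeFn_add, Pi.add_apply]
    exact inner_add_right _ _ _
  map_smul' c x := by
    apply lp.ext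
    funext i
    simp only [lp.coeFn_smul, Pi.smul_apply, RingHom.id_apply]
    exact inner_smul_right _ _ _
  norm_map' x := by
    have h : ‖(⟨fun i => ⟪f i, x⟫_ℂ, memV hP x⟩ : lp (fun _ : S => ℂ) 2)‖ ^ 2 = ‖x‖ ^ 2 := by
      rw [norm_sq_eq]
      rw [← hP x]
      exact tsum_congr fun i => by rw [norm_inner_symm]
    have := congrArg Real.sqrt h
    rwa [Real.sqrt_sq (norm_nonneg _), Real.sqrt_sq (norm_nonneg _)] at this

@[simp] lemma Vli_apply (f : S → H) (hP) (x : H) (i : S) :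
    (Vli f hP x : ∀ _ : S, ℂ) i = ⟪f i, x⟫_ℂ := rfl

variable (B : Set S) [DecidablePred (· ∈ B)]

lemma mask_mem (g : lp (fun _ : S => ℂ) 2) :
    Memℓp (fun i => if i ∈ B then 0 else g i) 2 := by
  apply memℓp_gen
  have hg : Summable fun i => ‖g i‖ ^ (2 : ℝ≥0∞).toReal := (lp.memℓp g).summable (by norm_num)
  refine Summable.of_nonneg_of_le (fun i => ?_) (fun i => ?_) hg
  · positivity
  · by_cases h : i ∈ B
    · simp only [h, if_true, norm_zero]
      rw [Real.zero_rpow (by norm_num)]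
      positivity
    · simp [h]

lemma mask_tsum_le (g : lp (fun _ : S => ℂ) 2) :
    ∑' i, ‖(if i ∈ B then 0 else g i : ℂ)‖ ^ 2 ≤ ∑' i, ‖g i‖ ^ 2 := by
  have hg : Summable fun i => ‖g i‖ ^ 2 := by
    have := (lp.memℓp g).summable (p := 2) (by norm_num)
    have h2 : ((2 : ℝ≥0∞)).toReal = ((2 : ℕ) : ℝ) := by norm_num
    rw [h2] at this
    simpa [Real.rpow_natCast] using this
  refine Summable.tsum_le_tsum (fun i => ?_) ?_ hg
  · by_cases h : i ∈ B <;> simp [h] <;> positivity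
  · refine Summable.of_nonneg_of_le (fun i => by positivity) (fun i => ?_) hg
    by_cases h : i ∈ B <;> simp [h] <;> positivity

noncomputable def Dmask : lp (fun _ : S => ℂ) 2 →L[ℂ] lp (fun _ : S => ℂ) 2 :=
  LinearMap.mkContinuous
    { toFun := fun g => ⟨fun i => if i ∈ B then 0 else g i, mask_mem B g⟩
      map_add' := fun g h => by
        apply lp.ext; funext i
        simp only [lp.coeFn_add, Pi.add_apply]
        by_cases hi : i ∈ B <;> simp [hi]
      map_smul' := fun c g => by
        apply lp.ext; funext i
        simp only [lp.coeFn_smul, Pi.smul_apply, RingHom.id_apply, smul_eq_mul]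
        by_cases hi : i ∈ B <;> simp [hi] }
    1 (fun g => by
      rw [one_mul]
      show ‖(⟨fun i => if i ∈ B then 0 else g i, mask_mem B g⟩ :
          lp (fun _ : S => ℂ) 2)‖ ≤ ‖g‖
      have h1 : ‖(⟨fun i => if i ∈ B then 0 else g i, mask_mem B g⟩ :
          lp (fun _ : S => ℂ) 2)‖ ^ 2 ≤ ‖g‖ ^ 2 := by
        rw [norm_sq_eq, norm_sq_eq]
        exact mask_tsum_le B g
      nlinarith [norm_nonneg (⟨fun i => if i ∈ B then 0 else g i, mask_mem B g⟩ :
          lp (fun _ : S => ℂ) 2), norm_nonneg g])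

@[simp] lemma Dmask_apply (g : lp (fun _ : S => ℂ) 2) (i : S) :
    (Dmask B g : ∀ _ : S, ℂ) i = if i ∈ B then 0 else g i := rfl

lemma inner_Dmask_left (g h : lp (fun _ : S => ℂ) 2) :
    ⟪Dmask B g, h⟫_ℂ = ⟪g, Dmask B h⟫_ℂ := by
  rw [lp.inner_eq_tsum, lp.inner_eq_tsum]
  refine tsum_congr fun i => ?_
  by_cases hi : i ∈ B <;> simp [hi, RCLike.inner_apply]

end FrameCompressionAux

open FrameCompressionAux

set_option maxHeartbeats 2000000 in
/-- For a Parseval frame `{f i}_{i ∈ S}` with Gram matrix `G` and `B ⊆ S`,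
the closed linear span of `{f i : i ∈ B}` is all of `H` iff `1` is not an eigenvalue of
the compression `D_{Bᶜ} G D_{Bᶜ}` (the operator `T` whose matrix vanishes in rows and
columns indexed by `B` and agrees with `G` elsewhere). -/
theorem span_eq_top_iff_not_eigenvalue_one_compression
    {S : Type*} [DecidableEq S] {H : Type*} [NormedAddCommGroup H]
    [InnerProductSpace ℂ H] [CompleteSpace H]
    (f : S → H) (hParseval : ∀ x : H, ∑' i : S, ‖⟪x, f i⟫_ℂ‖ ^ 2 = ‖x‖ ^ 2)
    (B : Set S) [DecidablePred (· ∈ B)]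
    (T : lp (fun _ : S => ℂ) 2 →L[ℂ] lp (fun _ : S => ℂ) 2)
    (hT : ∀ i j : S, ⟪T (lp.single 2 j 1), lp.single 2 i 1⟫_ℂ
        = if i ∈ B ∨ j ∈ B then 0 else ⟪f j, f i⟫_ℂ) :
    (Submodule.span ℂ (f '' B)).topologicalClosure = ⊤ ↔
      ¬ Module.End.HasEigenvalue
        (T : lp (fun _ : S => ℂ) 2 →ₗ[ℂ] lp (fun _ : S => ℂ) 2) 1 := by
  classical
  set Vl : H →ₗᵢ[ℂ] lp (fun _ : S => ℂ) 2 := Vli f hParseval with hVl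
  set Vc : H →L[ℂ] lp (fun _ : S => ℂ) 2 := Vl.toContinuousLinearMap with hVc
  set A : lp (fun _ : S => ℂ) 2 →L[ℂ] H := ContinuousLinearMap.adjoint Vc with hA
  set Dc : lp (fun _ : S => ℂ) 2 →L[ℂ] lp (fun _ : S => ℂ) 2 := Dmask B with hDc
  have hVapp : ∀ (x : H) (i : S), (Vc x : ∀ _ : S, ℂ) i = ⟪f i, x⟫_ℂ := fun x i => rfl
  have hDapp : ∀ (g : lp (fun _ : S => ℂ) 2) (i : S),
      (Dc g : ∀ _ : S, ℂ) i = if i ∈ B then 0 else g i := fun g i => rfl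
  have hAV : ∀ x : H, A (Vc x) = x := by
    intro x
    apply ext_inner_right ℂ
    intro y
    rw [ContinuousLinearMap.adjoint_inner_left]
    exact Vl.inner_map_map x y
  have hA_single : ∀ j : S, A (lp.single 2 j 1) = f j := by
    intro j
    apply ext_inner_right ℂ
    intro y
    rw [ContinuousLinearMap.adjoint_inner_left, lp.inner_single_left]
    simp [hVapp, RCLike.inner_apply]
  have hDsingle : ∀ j : S,
      Dc (lp.single 2 j 1) = if j ∈ B then 0 else lp.single 2 j 1 := by
    intro j
    apply lp.ext
    funext i
    by_cases hj : j ∈ B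
    · rw [if_pos hj, hDapp]
      by_cases hi : i ∈ B
      · simp [hi]
      · rw [if_neg hi, lp.single_apply_ne 2 j 1 (fun h => hi (by rw [h]; exact hj))]
        simp [lp.coeFn_zero]
    · rw [if_neg hj, hDapp]
      by_cases hi : i ∈ B
      · rw [if_pos hi, lp.single_apply_ne 2 j 1 (fun h => hj (by rw [← h]; exact hi))]
      · rw [if_neg hi]
  have coordext : ∀ g h : lp (fun _ : S => ℂ) 2,
      (∀ i : S, ⟪g, lp.single 2 i 1⟫_ℂ = ⟪h, lp.single 2 i 1⟫_ℂ) → g = h := by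
    intro g h hgh
    apply lp.ext
    funext i
    have := hgh i
    rw [lp.inner_single_right, lp.inner_single_right] at this
    simp only [RCLike.inner_apply, map_one, mul_one] at this
    simpa using congrArg (starRingEnd ℂ) this
  have hTsingle : ∀ j : S,
      T (lp.single 2 j 1) = Dc (Vc (A (Dc (lp.single 2 j 1)))) := by
    intro j
    apply coordext
    intro i
    rw [hT i j, hDsingle j]
    by_cases hj : j ∈ B
    · simp [hj]
    · rw [if_neg hj, hA_single, inner_Dmask_left]
      rw [show Dmask B (lp.single 2 i 1) = Dc (lp.single 2 i 1) from rfl, hDsingle i]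
      by_cases hi : i ∈ B
      · simp [hi, hj]
      · rw [if_neg hi, if_neg (by tauto), lp.inner_single_right]
        simp [hVapp, RCLike.inner_apply, inner_conj_symm]
  have hTg : ∀ g : lp (fun _ : S => ℂ) 2, T g = Dc (Vc (A (Dc g))) := by
    intro g
    set T' : lp (fun _ : S => ℂ) 2 →L[ℂ] lp (fun _ : S => ℂ) 2 :=
      Dc ∘L (Vc ∘L (A ∘L Dc)) with hT'
    have hs := lp.hasSum_single (E := fun _ : S => ℂ) (p := 2) ENNReal.ofNat_ne_top g
    have h1 : HasSum (fun i => T (lp.single 2 i (g i))) (T g) := hs.mapL T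
    have h2 : HasSum (fun i => T' (lp.single 2 i (g i))) (T' g) := hs.mapL T'
    have heq : (fun i => T (lp.single 2 i (g i))) =
        fun i => T' (lp.single 2 i (g i)) := by
      funext i
      have hsm : lp.single (E := fun _ : S => ℂ) 2 i (g i) = g i • lp.single 2 i 1 := by
        rw [← lp.single_smul]
        norm_num
      rw [hsm, map_smul, map_smul, hTsingle]
      rfl
    rw [heq] at h1
    exact h1.unique h2
  have horth : ∀ x : H, x ∈ (Submodule.span ℂ (f '' B))ᗮ ↔ ∀ i ∈ B, ⟪f i, x⟫_ℂ = 0 := by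
    intro x
    rw [Submodule.mem_orthogonal]
    constructor
    · intro h i hi
      exact h _ (Submodule.subset_span ⟨i, hi, rfl⟩)
    · intro h u hu
      refine Submodule.span_induction ?_ ?_ ?_ ?_ hu
      · rintro u ⟨i, hi, rfl⟩
        exact h i hi
      · simp
      · intro a b _ _ ha hb
        rw [inner_add_left, ha, hb, add_zero]
      · intro c a _ ha
        rw [inner_smul_left, ha, mul_zero]
  rw [Submodule.topologicalClosure_eq_top_iff]
  constructor
  · intro hbot heig
    obtain ⟨g, hgmem, hg0⟩ := heig.exists_hasEigenvector
    have hgT : T g = g := by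
      have := Module.End.mem_eigenspace_iff.1 hgmem
      rw [one_smul] at this
      simpa using this
    set xg : H := A (Dc g) with hxg
    have hgD : g = Dc (Vc xg) := by rw [← hgT, hTg]
    have hinner : ⟪g, g⟫_ℂ = ⟪xg, xg⟫_ℂ := by
      calc ⟪g, g⟫_ℂ = ⟪g, Dc (Vc xg)⟫_ℂ := by rw [← hgD]
        _ = ⟪Dc g, Vc xg⟫_ℂ := by rw [hDc]; exact (inner_Dmask_left B g (Vc xg)).symm
        _ = ⟪A (Dc g), xg⟫_ℂ := by rw [hA, ContinuousLinearMap.adjoint_inner_left]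
        _ = ⟪xg, xg⟫_ℂ := by rw [← hxg]
    have hnormxg : ‖xg‖ = ‖g‖ := by
      have h2 : ‖g‖ ^ 2 = ‖xg‖ ^ 2 := by
        rw [← inner_self_eq_norm_sq (𝕜 := ℂ), ← inner_self_eq_norm_sq (𝕜 := ℂ), hinner]
      nlinarith [norm_nonneg xg, norm_nonneg g]
    set u : lp (fun _ : S => ℂ) 2 := Vc xg with hu
    have hDu : Dc u = g := hgD.symm
    have hnu : ‖u‖ = ‖g‖ := by
      rw [hu, show ‖Vc xg‖ = ‖xg‖ from Vl.norm_map xg, hnormxg]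
    have hperp : ⟪Dc u, u - Dc u⟫_ℂ = 0 := by
      rw [lp.inner_eq_tsum]
      have hz : ∀ i : S, ⟪(Dc u : ∀ _ : S, ℂ) i, ((u - Dc u : lp (fun _ : S => ℂ) 2) :
          ∀ _ : S, ℂ) i⟫_ℂ = 0 := by
        intro i
        by_cases hi : i ∈ B
        · rw [hDapp, if_pos hi]
          exact inner_zero_left _
        · have : ((u - Dc u : lp (fun _ : S => ℂ) 2) : ∀ _ : S, ℂ) i = 0 := by
            rw [lp.coeFn_sub, Pi.sub_apply, hDapp, if_neg hi, sub_self]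
          rw [this]
          exact inner_zero_right _
      rw [tsum_congr hz, tsum_zero]
    have hpyth : ‖u‖ ^ 2 = ‖Dc u‖ ^ 2 + ‖u - Dc u‖ ^ 2 := by
      have h := norm_add_sq (𝕜 := ℂ) (Dc u) (u - Dc u)
      rw [hperp, add_sub_cancel] at h
      simpa using h
    have hDu_norm : ‖Dc u‖ = ‖g‖ := by rw [hDu]
    have h0 : ‖u - Dc u‖ ^ 2 = 0 := by
      rw [hnu, hDu_norm] at hpyth
      linarith
    have hu_eq : u = Dc u := by
      have hnz : ‖u - Dc u‖ = 0 := by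
        have := norm_nonneg (u - Dc u)
        nlinarith
      have := norm_eq_zero.1 hnz
      exact (sub_eq_zero.1 this)
    have hVxg : Vc xg = g := by rw [← hu, hu_eq, hDu]
    have hxg0 : xg ≠ 0 := by
      intro h
      have : ‖g‖ = 0 := by rw [← hnormxg, h, norm_zero]
      exact hg0 (norm_eq_zero.1 this)
    have hmem : xg ∈ (Submodule.span ℂ (f '' B))ᗮ := by
      refine (horth xg).2 fun i hi => ?_
      have h1 : (Vc xg : ∀ _ : S, ℂ) i = (g : ∀ _ : S, ℂ) i := by rw [hVxg]
      rw [hVapp] at h1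
      rw [h1]
      have h2 : (g : ∀ _ : S, ℂ) i = ((Dc (Vc xg) : lp (fun _ : S => ℂ) 2) :
          ∀ _ : S, ℂ) i := by rw [← hgD]
      rw [hDapp, if_pos hi] at h2
      exact h2
    rw [hbot] at hmem
    exact hxg0 (Submodule.mem_bot ℂ |>.1 hmem)
  · intro hne
    rw [Submodule.eq_bot_iff]
    intro x hx
    by_contra hx0
    have horthx := (horth x).1 hx
    set g := Vc x with hg
    have hgx : ‖g‖ = ‖x‖ := Vl.norm_map x
    have hg0 : g ≠ 0 := by
      intro h
      apply hx0
      rw [← norm_eq_zero, ← hgx, h, norm_zero]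
    have hDg : Dc g = g := by
      apply lp.ext
      funext i
      rw [hDapp]
      by_cases hi : i ∈ B
      · rw [if_pos hi, hVapp, horthx i hi]
      · rw [if_neg hi]
    have hTgg : T g = g := by
      rw [hTg, hDg, hg, hAV, hDg]
    exact hne (Module.End.hasEigenvalue_of_hasEigenvector
      ⟨Module.End.mem_eigenspace_iff.2 (by rw [one_smul]; exact hTgg), hg0⟩)
end

section
/- Let H be a Hilbert space with orthonormal basis {e_j}_{j∈S}, P an orthogonal projection on H, and B ⊆ S. Then the linear span of {P e_j : j ∈ B} is dense in P(H) if and only if the operator on ℓ²(B^c) with matrix (⟨(I−P)e_j, (I−P)e_i⟩)_{i,j∈B^c} is injective. -/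
/-!
Let `U : ℓ²(Bᶜ) → H` be the isometry `c ↦ ∑ cⱼ eⱼ`. The matrix hypothesis says `T = V* V` for
`V = (I - P) U`, so `T` is injective iff `V` is, i.e. iff `range U ∩ range P = 0`. On the other
side, the span of `{P eⱼ}_{j ∈ B}` is dense in `range P` iff no nonzero `x ∈ range P` is orthogonal
to it; as `x = P x` and `P` is self-adjoint, this means `x ⊥ eⱼ` for `j ∈ B`, i.e. `x ∈ range U`.
-/

open scoped InnerProductSpace lp

namespace Submodule

variable {𝕜 E : Type*} [RCLike 𝕜] [NormedAddCommGroup E] [InnerProductSpace 𝕜 E]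

theorem mem_orthogonal_span_iff {t : Set E} {x : E} :
    x ∈ (span 𝕜 t)ᗮ ↔ ∀ u ∈ t, ⟪u, x⟫_𝕜 = 0 := by
  rw [← span_singleton_le_iff_mem, ← isOrtho_iff_le, isOrtho_comm, isOrtho_span]
  simp

theorem topologicalClosure_eq_iff_inf_orthogonal_eq_bot [CompleteSpace E] {M K : Submodule 𝕜 E}
    (hMK : M ≤ K) (hK : IsClosed (K : Set E)) : M.topologicalClosure = K ↔ K ⊓ Mᗮ = ⊥ := by
  constructor
  · rintro rfl
    rw [← orthogonal_closure M, inf_orthogonal_eq_bot]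
  · intro h
    have := sup_orthogonal_inf_of_hasOrthogonalProjection (M.topologicalClosure_minimal hMK hK)
    rwa [orthogonal_closure, inf_comm, h, sup_bot_eq] at this

theorem range_inf_orthogonal_span_image {P : E →L[𝕜] E} (hPidem : IsIdempotentElem P)
    (hPsymm : (P : E →ₗ[𝕜] E).IsSymmetric) (t : Set E) :
    LinearMap.range (P : E →ₗ[𝕜] E) ⊓ (span 𝕜 (P '' t))ᗮ
      = LinearMap.range (P : E →ₗ[𝕜] E) ⊓ (span 𝕜 t)ᗮ := by
  ext x
  simp only [mem_inf, mem_orthogonal_span_iff, Set.forall_mem_image, and_congr_right_iff]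
  intro hx
  have hPx : P x = x := LinearMap.IsIdempotentElem.mem_range_iff
    (ContinuousLinearMap.IsIdempotentElem.toLinearMap hPidem) |>.mp hx
  simp_rw [← ContinuousLinearMap.coe_coe P, hPsymm _ x, ContinuousLinearMap.coe_coe, hPx]

end Submodule

open Submodule in
theorem LinearMap.ker_comp_eq_bot_iff_of_injective {R M N P : Type*} [Ring R]
    [AddCommGroup M] [AddCommGroup N] [AddCommGroup P] [Module R M] [Module R N] [Module R P]
    {f : M →ₗ[R] N} (hf : Function.Injective f) (g : N →ₗ[R] P) :
    ker (g ∘ₗ f) = ⊥ ↔ range f ⊓ ker g = ⊥ := by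
  rw [ker_comp, ← map_comap_eq, ← map_bot f, (map_injective_of_injective hf).eq_iff]

namespace lp

variable {ι 𝕜 : Type*} [RCLike 𝕜] [DecidableEq ι]

theorem ext_continuousLinearMap_single_one {F : Type*} [AddCommMonoid F] [Module 𝕜 F]
    [TopologicalSpace F] [T2Space F] {f g : ℓ²(ι, 𝕜) →L[𝕜] F}
    (h : ∀ i, f (lp.single 2 i 1) = g (lp.single 2 i 1)) : f = g := by
  refine lp.ext_continuousLinearMap ENNReal.ofNat_ne_top fun i => ?_
  ext
  simp [h]

theorem ext_inner_single_s3 {A B : ℓ²(ι, 𝕜) →L[𝕜] ℓ²(ι, 𝕜)}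
    (h : ∀ i j,
      ⟪A (lp.single 2 j 1), lp.single 2 i 1⟫_𝕜 = ⟪B (lp.single 2 j 1), lp.single 2 i 1⟫_𝕜) :
    A = B := by
  refine ext_continuousLinearMap_single_one fun j => ext_inner_right 𝕜 fun v => ?_
  have : innerSL 𝕜 (A (lp.single 2 j 1)) = innerSL 𝕜 (B (lp.single 2 j 1)) :=
    ext_continuousLinearMap_single_one (h · j)
  exact DFunLike.congr_fun this v

end lp

namespace HilbertBasis

variable {ι 𝕜 E : Type*} [RCLike 𝕜] [NormedAddCommGroup E] [InnerProductSpace 𝕜 E]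
  [CompleteSpace E] (b : HilbertBasis ι 𝕜 E) (s : Set ι)

noncomputable def subtypeLinearIsometry : ℓ²(s, 𝕜) →ₗᵢ[𝕜] E :=
  (b.orthonormal.comp _ Subtype.val_injective).orthogonalFamily.linearIsometry

theorem hasSum_subtypeLinearIsometry (c : ℓ²(s, 𝕜)) :
    HasSum (fun i : s => c i • b i) (b.subtypeLinearIsometry s c) :=
  (b.orthonormal.comp _ Subtype.val_injective).orthogonalFamily.hasSum_linearIsometry c

@[simp]
theorem subtypeLinearIsometry_single [DecidableEq ι] (i : s) :
    b.subtypeLinearIsometry s (lp.single 2 i 1) = b i := by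
  simp [subtypeLinearIsometry]

theorem range_subtypeLinearIsometry_compl :
    LinearMap.range (b.subtypeLinearIsometry sᶜ).toLinearMap = (Submodule.span 𝕜 (b '' s))ᗮ := by
  ext x
  rw [Submodule.mem_orthogonal_span_iff, Set.forall_mem_image]
  constructor
  · rintro ⟨c, rfl⟩ i hi
    have hterm : ∀ j : ↥sᶜ, ⟪b i, c j • b j⟫_𝕜 = 0 := fun j => by
      rw [inner_smul_right, b.orthonormal.2 (ne_of_mem_of_not_mem hi j.2), mul_zero]
    have := (b.hasSum_subtypeLinearIsometry sᶜ c).mapL (innerSL 𝕜 (b i))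
    simp only [innerSL_apply_apply, hterm] at this
    exact (hasSum_zero.unique this).symm
  · intro hx
    have hmem : Memℓp (fun j : ↥sᶜ => b.repr x j) 2 := by
      have hp : 0 < (2 : ENNReal).toReal := by norm_num
      rw [memℓp_gen_iff hp]
      exact ((memℓp_gen_iff hp).mp (b.repr x).2).subtype _
    refine ⟨⟨_, hmem⟩, (b.hasSum_subtypeLinearIsometry sᶜ _).unique ?_⟩
    refine (hasSum_subtype_iff_of_support_subset fun i hi => ?_).mpr (b.hasSum_repr x)
    contrapose! hi
    simp [b.repr_apply_apply, hx (Set.notMem_compl_iff.mp hi)]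

end HilbertBasis

/-- If `{e j}_{j ∈ S}` is an orthonormal basis of `H`, `P` an orthogonal
projection and `B ⊆ S`, then the span of `{P e j : j ∈ B}` is dense in `P(H)` iff the
operator on `ℓ²(Bᶜ)` with matrix `(⟪(I-P) e j, (I-P) e i⟫)_{i,j ∈ Bᶜ}` is injective. -/
theorem dense_span_iff_injective
    {S : Type*} [DecidableEq S] {H : Type*} [NormedAddCommGroup H]
    [InnerProductSpace ℂ H] [CompleteSpace H]
    (e : HilbertBasis S ℂ H)
    (P : H →L[ℂ] H) (hPidem : IsIdempotentElem P) (hPsa : IsSelfAdjoint P)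
    (B : Set S)
    (T : lp (fun _ : ↥Bᶜ => ℂ) 2 →L[ℂ] lp (fun _ : ↥Bᶜ => ℂ) 2)
    (hT : ∀ i j : ↥Bᶜ, ⟪T (lp.single 2 j 1), lp.single 2 i 1⟫_ℂ
        = ⟪((1 : H →L[ℂ] H) - P) (e (j : S)), ((1 : H →L[ℂ] H) - P) (e (i : S))⟫_ℂ) :
    (Submodule.span ℂ ((fun j => P (e j)) '' B)).topologicalClosure
        = LinearMap.range (P : H →ₗ[ℂ] H) ↔
      Function.Injective T := by
  set U := e.subtypeLinearIsometry Bᶜ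
  set V : ℓ²(↥Bᶜ, ℂ) →L[ℂ] H := (1 - P) ∘L U.toContinuousLinearMap
  have hV (j : ↥Bᶜ) : V (lp.single 2 j 1) = (1 - P) (e j) :=
    congrArg ⇑(1 - P) (e.subtypeLinearIsometry_single Bᶜ j)
  have hTV : T = ContinuousLinearMap.adjoint V ∘L V := lp.ext_inner_single_s3 fun i j => by
    rw [hT, ContinuousLinearMap.comp_apply, ContinuousLinearMap.adjoint_inner_left, hV, hV]
  have hspan : Submodule.span ℂ ((fun j => P (e j)) '' B) ≤ LinearMap.range (P : H →ₗ[ℂ] H) :=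
    Submodule.span_le.2 (by rintro _ ⟨j, -, rfl⟩; exact ⟨e j, rfl⟩)
  rw [Submodule.topologicalClosure_eq_iff_inf_orthogonal_eq_bot hspan
      (ContinuousLinearMap.IsIdempotentElem.isClosed_range hPidem),
    ← Set.image_image P e, Submodule.range_inf_orthogonal_span_image hPidem hPsa.isSymmetric,
    ← e.range_subtypeLinearIsometry_compl, hTV, ContinuousLinearMap.coe_comp,
    ContinuousLinearMap.adjoint_comp_self_injective_iff, inf_comm,
    LinearMap.IsIdempotentElem.range_eq_ker_one_sub
      (ContinuousLinearMap.IsIdempotentElem.toLinearMap hPidem),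
    ← LinearMap.ker_comp_eq_bot_iff_of_injective U.injective]
  exact LinearMap.ker_eq_bot
end

section
/- Let H be a finite-dimensional Hilbert space with orthonormal basis {e_j}_{j∈S}, P an orthogonal projection, and B ⊆ S. Then {P e_j : j ∈ B} spans P(H) if and only if the family {(I−P)e_j : j ∈ B^c} is linearly independent. -/
open scoped InnerProductSpace

/-- In a finite-dimensional Hilbert space with orthonormal basis
`{e j}_{j ∈ S}`, for an orthogonal projection `P` and `B ⊆ S`, the family
`{P e j : j ∈ B}` spans `P(H)` iff `{(I-P) e j : j ∈ Bᶜ}` is linearly independent. -/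
theorem span_proj_iff_linearIndependent_complement
    {S : Type*} [Fintype S] {H : Type*} [NormedAddCommGroup H]
    [InnerProductSpace ℂ H] [FiniteDimensional ℂ H]
    (e : S → H) (he : Orthonormal ℂ e) (hspan : Submodule.span ℂ (Set.range e) = ⊤)
    (P : H →L[ℂ] H) (hPidem : IsIdempotentElem P) (hPsa : IsSelfAdjoint P)
    (B : Set S) :
    Submodule.span ℂ ((fun j => P (e j)) '' B) = LinearMap.range (P : H →ₗ[ℂ] H) ↔
      LinearIndependent ℂ (fun j : ↥Bᶜ => ((1 : H →L[ℂ] H) - P) (e (j : S))) := by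
  classical
  have hsym : ∀ x y : H, ⟪P x, y⟫_ℂ = ⟪x, P y⟫_ℂ := fun x y => hPsa.isSymmetric x y
  have hPP : ∀ x, P (P x) = P x := fun x => by
    have := congrArg (fun T : H →L[ℂ] H => T x) hPidem
    simpa using this
  have hb : ⊤ ≤ Submodule.span ℂ (Set.range e) := hspan.ge
  let b : OrthonormalBasis S ℂ H := OrthonormalBasis.mk he hb
  have hbe : ∀ j, b j = e j := fun j => by
    simp [b, OrthonormalBasis.coe_mk]
  have hrepr : ∀ w : H, ∑ j : S, ⟪e j, w⟫_ℂ • e j = w := fun w => by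
    have := b.sum_repr' w
    simpa [hbe] using this
  constructor
  · intro hs
    rw [Fintype.linearIndependent_iff]
    intro g hg i
    set x : H := ∑ j : ↥Bᶜ, g j • e j with hx
    have hQx : x - P x = 0 := by
      have : ∑ j : ↥Bᶜ, g j • (e j - P (e j)) = 0 := by
        simpa [ContinuousLinearMap.sub_apply] using hg
    -- x - P x = ∑ g j • (e j - P e j)
      calc x - P x = ∑ j : ↥Bᶜ, g j • (e j - P (e j)) := by
            simp [hx, map_sum, smul_sub, Finset.sum_sub_distrib]
        _ = 0 := this
    have hPx : P x = x := (sub_eq_zero.mp hQx).symm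
    have hxr : x ∈ Submodule.span ℂ ((fun j => P (e j)) '' B) := by
      rw [hs]; exact ⟨x, hPx⟩
    have himg : ((fun j => P (e j)) '' B : Set H) = (P : H →ₗ[ℂ] H) '' (e '' B) := by
      rw [Set.image_image]; rfl
    rw [himg, ← Submodule.map_span] at hxr
    obtain ⟨y, hy, hyx'⟩ := hxr
    have hyx : P y = x := hyx'
    have hxperp : ∀ j ∈ B, ⟪x, e j⟫_ℂ = 0 := by
      intro j hj
      rw [hx, sum_inner]
      refine Finset.sum_eq_zero fun k _ => ?_
      rw [inner_smul_left, he.2 (fun hkj : (k : S) = j => k.2 (hkj ▸ hj)), mul_zero]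
    have hinner : ⟪x, y⟫_ℂ = 0 := by
      refine Submodule.span_induction (p := fun z _ => ⟪x, z⟫_ℂ = 0) ?_ ?_ ?_ ?_ hy
      · rintro _ ⟨j, hj, rfl⟩; exact hxperp j hj
      · simp
      · intro u v _ _ hu hv; rw [inner_add_right, hu, hv, add_zero]
      · intro c u _ hu; rw [inner_smul_right, hu, mul_zero]
    have hxx : ⟪x, x⟫_ℂ = 0 := by
      calc ⟪x, x⟫_ℂ = ⟪x, P y⟫_ℂ := by rw [hyx]
        _ = ⟪P x, y⟫_ℂ := (hsym x y).symm
        _ = ⟪x, y⟫_ℂ := by rw [hPx]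
        _ = 0 := hinner
    have hx0 : x = 0 := inner_self_eq_zero.mp hxx
    have hli : LinearIndependent ℂ (fun j : ↥Bᶜ => e (j : S)) :=
      he.linearIndependent.comp _ Subtype.val_injective
    exact Fintype.linearIndependent_iff.mp hli g (hx ▸ hx0) i
  · intro hind
    apply le_antisymm
    · rw [Submodule.span_le]
      rintro _ ⟨j, hj, rfl⟩
      exact ⟨e j, rfl⟩
    · intro x hx
      set V := Submodule.span ℂ ((fun j => P (e j)) '' B) with hV
      have hVr : V ≤ LinearMap.range (P : H →ₗ[ℂ] H) := by
        rw [hV, Submodule.span_le]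
        rintro _ ⟨j, hj, rfl⟩
        exact ⟨e j, rfl⟩
      obtain ⟨v, hv, w, hw, hxvw⟩ := V.exists_add_mem_mem_orthogonal x
      have hwr : w ∈ LinearMap.range (P : H →ₗ[ℂ] H) := by
        have : w = x - v := by rw [hxvw]; abel
        rw [this]
        exact Submodule.sub_mem _ hx (hVr hv)
      obtain ⟨u, hu⟩ := hwr
      have hPw : P w = w := by rw [← hu]; exact hPP u
      have hcB : ∀ j ∈ B, ⟪e j, w⟫_ℂ = 0 := by
        intro j hj
        have hPej : P (e j) ∈ V := Submodule.subset_span ⟨j, hj, rfl⟩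
        calc ⟪e j, w⟫_ℂ = ⟪e j, P w⟫_ℂ := by rw [hPw]
          _ = ⟪P (e j), w⟫_ℂ := (hsym (e j) w).symm
          _ = 0 := hw _ hPej
      have hsum : ∑ j : ↥Bᶜ, ⟪e (j : S), w⟫_ℂ • (e (j : S) - P (e (j : S))) = 0 := by
        have h1 : ∑ j ∈ (Bᶜ : Set S).toFinset, ⟪e j, w⟫_ℂ • e j = w := by
          have := Finset.sum_subset (f := fun j => ⟪e j, w⟫_ℂ • e j)
            (Finset.subset_univ ((Bᶜ : Set S).toFinset)) ?_
          · exact this.trans (hrepr w)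
          · intro j _ hj
            have h0 := hcB j (by simpa using hj)
            simp [h0]
        have h2 : ∑ j ∈ (Bᶜ : Set S).toFinset, ⟪e j, w⟫_ℂ • (e j - P (e j)) = 0 := by
          have : ∑ j ∈ (Bᶜ : Set S).toFinset, ⟪e j, w⟫_ℂ • (e j - P (e j)) =
              (∑ j ∈ (Bᶜ : Set S).toFinset, ⟪e j, w⟫_ℂ • e j) -
                P (∑ j ∈ (Bᶜ : Set S).toFinset, ⟪e j, w⟫_ℂ • e j) := by
            simp [smul_sub, Finset.sum_sub_distrib, map_sum]
          rw [this, h1, hPw, sub_self]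
        rw [← h2]
        exact Finset.sum_set_coe (f := fun j => ⟪e j, w⟫_ℂ • (e j - P (e j))) (Bᶜ : Set S)
      have hc0 : ∀ j : ↥Bᶜ, ⟪e (j : S), w⟫_ℂ = 0 := by
        intro j
        refine Fintype.linearIndependent_iff.mp hind (fun j => ⟪e (j : S), w⟫_ℂ) ?_ j
        simpa [ContinuousLinearMap.sub_apply] using hsum
      have hw0 : w = 0 := by
        rw [← hrepr w]
        refine Finset.sum_eq_zero fun j _ => ?_
        by_cases hj : j ∈ B
        · rw [hcB j hj, zero_smul]
        · rw [hc0 ⟨j, hj⟩, zero_smul]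
      rw [hxvw, hw0, add_zero]
      exact hv
end

section
/- Let (X, I) be a matroid and R a positive integer. A finite set J ⊆ X can be partitioned into R independent sets if and only if for every subset E ⊆ J one has |E| ≤ R · rank(E). -/
open Finset

open Classical in
/-- The rank of a set `E` in a matroid given by its independence predicate:
the maximal cardinality of an independent subset of `E`. -/
noncomputable def matroidRank {X : Type*} [DecidableEq X]
    (Indep : Finset X → Prop) (E : Finset X) : ℕ :=
  (E.powerset.filter fun F => Indep F).sup Finset.card


/-!
Give every element of `J` the list of all `R` colours. The hypothesis `|E| ≤ R · rank E` is then
Rado's condition for an independent transversal of the lists in the direct sum of `R` copies of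
the matroid. As in Rado's proof, an element carrying two colours `i ≠ j` can lose one of them
without breaking the condition: if deleting `i` fails on `K₁` and deleting `j` fails on `K₂`,
submodularity of the rank, applied colour by colour, contradicts the condition on `K₁ ∪ K₂` and
`(K₁ ∩ K₂) \ {x}`. Once every list is a single colour, the condition on a colour class says that
its cardinality is at most its rank, i.e. that it is independent.
-/

open Finset Function

namespace Matroid

variable {α ι : Type*} [Fintype ι] [DecidableEq ι]

/-- The rank of `{(y, i) | y ∈ K, i ∈ L y}` in the direct sum of `ι`-many copies of `M`. -/
noncomputable def listRank (M : Matroid α) (L : α → Finset ι) (K : Finset α) : ℕ∞ :=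
  ∑ i, M.eRk ({y ∈ K | i ∈ L y} : Finset α)

def RadoCondition (M : Matroid α) (J : Finset α) (L : α → Finset ι) : Prop :=
  ∀ K ⊆ J, (K.card : ℕ∞) ≤ M.listRank L K

variable {M : Matroid α} {J K K₁ K₂ : Finset α} {L : α → Finset ι} {x : α} {i j : ι}

lemma listRank_update_of_notMem [DecidableEq α] (hx : x ∉ K) (s : Finset ι) :
    M.listRank (update L x s) K = M.listRank L K := by
  refine sum_congr rfl fun k _ => ?_
  rw [filter_congr fun y hy => by rw [update_of_ne (ne_of_mem_of_not_mem hy hx)]]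

lemma listRank_union_add_listRank_erase_inter_le [DecidableEq α] (hx₁ : x ∈ K₁) (hx₂ : x ∈ K₂)
    (hij : i ≠ j) :
    M.listRank L (K₁ ∪ K₂) + M.listRank L ((K₁ ∩ K₂).erase x) ≤
      M.listRank (update L x ((L x).erase i)) K₁ + M.listRank (update L x ((L x).erase j)) K₂ := by
  simp only [listRank, ← sum_add_distrib]
  refine sum_le_sum fun k _ => ?_
  set P : Finset α := {y ∈ K₁ | k ∈ update L x ((L x).erase i) y}
  set Q : Finset α := {y ∈ K₂ | k ∈ update L x ((L x).erase j) y}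
  have hunion : {y ∈ K₁ ∪ K₂ | k ∈ L y} ⊆ P ∪ Q := by
    intro y hy
    simp only [P, Q, mem_union, mem_filter, update_apply] at hy ⊢
    split_ifs with hyx
    -- `x` keeps every colour `k ≠ i` in `P`, and colour `i ≠ j` in `Q`
    · subst hyx; simp only [mem_erase]; by_cases hki : k = i <;> simp_all
    · tauto
  have hinter : {y ∈ (K₁ ∩ K₂).erase x | k ∈ L y} ⊆ P ∩ Q := by
    intro y hy
    simp only [P, Q, mem_inter, mem_erase, mem_filter, update_apply] at hy ⊢
    simp_all
  calc _ ≤ M.eRk ↑(P ∪ Q) + M.eRk ↑(P ∩ Q) :=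
        add_le_add (M.eRk_mono (coe_subset.2 hunion)) (M.eRk_mono (coe_subset.2 hinter))
    _ ≤ M.eRk P + M.eRk Q := by
        rw [coe_union, coe_inter, add_comm]; exact M.eRk_inter_add_eRk_union_le _ _

theorem RadoCondition.update_erase_or_update_erase [DecidableEq α] (h : M.RadoCondition J L)
    (x : α) (hij : i ≠ j) :
    M.RadoCondition J (update L x ((L x).erase i)) ∨
      M.RadoCondition J (update L x ((L x).erase j)) := by
  by_contra hfail
  simp only [RadoCondition, not_or, not_forall, not_le, exists_prop] at hfail
  obtain ⟨⟨K₁, hK₁J, hK₁⟩, K₂, hK₂J, hK₂⟩ := hfail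
  have mem_of_lt {s : Finset ι} {K : Finset α} (hKJ : K ⊆ J)
      (hK : M.listRank (update L x s) K < K.card) : x ∈ K := by
    by_contra hx
    rw [listRank_update_of_notMem hx] at hK
    exact (h K hKJ).not_gt hK
  have hx₁ := mem_of_lt hK₁J hK₁
  have hx₂ := mem_of_lt hK₂J hK₂
  have hcard : K₁.card + K₂.card = (K₁ ∪ K₂).card + ((K₁ ∩ K₂).erase x).card + 1 := by
    rw [← card_union_add_card_inter, card_erase_of_mem (mem_inter.2 ⟨hx₁, hx₂⟩)]
    have := card_pos.2 ⟨x, mem_inter.2 ⟨hx₁, hx₂⟩⟩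
    omega
  have hle := (add_le_add (h _ (union_subset hK₁J hK₂J))
    (h _ ((erase_subset _ _).trans (inter_subset_left.trans hK₁J)))).trans
    (listRank_union_add_listRank_erase_inter_le hx₁ hx₂ hij)
  lift M.listRank (update L x ((L x).erase i)) K₁ to ℕ using hK₁.ne_top with a
  lift M.listRank (update L x ((L x).erase j)) K₂ to ℕ using hK₂.ne_top with b
  norm_cast at hK₁ hK₂ hle
  omega

theorem RadoCondition.exists_card_le_one [DecidableEq α] (h : M.RadoCondition J L) :
    ∃ L' : α → Finset ι, (∀ x, L' x ⊆ L x) ∧ M.RadoCondition J L' ∧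
      ∀ x ∈ J, (L' x).card ≤ 1 := by
  induction hn : ∑ x ∈ J, (L x).card using Nat.strong_induction_on generalizing L with
  | _ n ih =>
  by_cases hsmall : ∀ x ∈ J, (L x).card ≤ 1
  · exact ⟨L, fun _ => Subset.rfl, h, hsmall⟩
  push Not at hsmall
  obtain ⟨x, hxJ, hx⟩ := hsmall
  obtain ⟨i, hi, j, hj, hij⟩ := one_lt_card.1 hx
  have update_erase_subset (k : ι) (y : α) : update L x ((L x).erase k) y ⊆ L y := by
    rcases eq_or_ne y x with rfl | hyx
    · simpa using erase_subset k (L y)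
    · rw [update_of_ne hyx]
  have of_erase : ∀ k ∈ L x, M.RadoCondition J (update L x ((L x).erase k)) →
      ∃ L' : α → Finset ι, (∀ x, L' x ⊆ L x) ∧ M.RadoCondition J L' ∧
        ∀ x ∈ J, (L' x).card ≤ 1 := by
    intro k hk hk'
    have hlt : ∑ y ∈ J, (update L x ((L x).erase k) y).card < n :=
      hn ▸ sum_lt_sum (fun y _ => card_le_card (update_erase_subset k y))
        ⟨x, hxJ, by rw [update_self, card_erase_of_mem hk]; omega⟩
    obtain ⟨L', hL'sub, hL', hL'card⟩ := ih _ hlt hk' rfl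
    exact ⟨L', fun y => (hL'sub y).trans (update_erase_subset k y), hL', hL'card⟩
  rcases h.update_erase_or_update_erase x hij with h' | h'
  exacts [of_erase i hi h', of_erase j hj h']

lemma RadoCondition.nonempty (h : M.RadoCondition J L) (hx : x ∈ J) : (L x).Nonempty := by
  rw [nonempty_iff_ne_empty]
  intro hempty
  have := h {x} (singleton_subset_iff.2 hx)
  simp [listRank, filter_singleton, hempty] at this

lemma RadoCondition.indep_filter_mem (h : M.RadoCondition J L)
    (hL : ∀ x ∈ J, (L x).card ≤ 1) (i : ι) : M.Indep ↑({x ∈ J | i ∈ L x} : Finset α) := by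
  set K : Finset α := {x ∈ J | i ∈ L x}
  have hrank : M.listRank L K = M.eRk K := by
    rw [listRank, sum_eq_single i]
    · rw [filter_true_of_mem fun y hy => (mem_filter.1 hy).2]
    · intro k _ hki
      rw [filter_false_of_mem, coe_empty, eRk_empty]
      intro y hy hky
      have hyJ : y ∈ J := (mem_filter.1 hy).1
      exact hki (card_le_one.1 (hL y hyJ) k hky i (mem_filter.1 hy).2)
    · simp
  apply (M.isRkFinite_of_finite K.finite_toSet).indep_of_encard_le_eRk
  rw [← hrank, Set.encard_coe_eq_coe_finsetCard]
  exact h K (filter_subset _ _)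

theorem exists_indep_partition_iff [DecidableEq α] (M : Matroid α) (J : Finset α) :
    (∃ A : ι → Finset α, (∀ i, A i ⊆ J) ∧ (∀ x ∈ J, ∃ i, x ∈ A i) ∧
        Pairwise (fun i k => Disjoint (A i) (A k)) ∧ ∀ i, M.Indep ↑(A i)) ↔
      ∀ K ⊆ J, (K.card : ℕ∞) ≤ Fintype.card ι * M.eRk ↑K := by
  constructor
  · rintro ⟨A, -, hcover, -, hA⟩ K hKJ
    have hK : K ⊆ univ.biUnion fun i => A i ∩ K := fun x hx => by
      obtain ⟨i, hi⟩ := hcover x (hKJ hx)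
      exact mem_biUnion.2 ⟨i, mem_univ _, mem_inter.2 ⟨hi, hx⟩⟩
    calc (K.card : ℕ∞) ≤ ∑ i, ((A i ∩ K).card : ℕ∞) := by
          exact_mod_cast (card_le_card hK).trans card_biUnion_le
      _ ≤ ∑ _i : ι, M.eRk K := sum_le_sum fun i _ => by
          rw [← Set.encard_coe_eq_coe_finsetCard]
          exact ((hA i).subset (coe_subset.2 inter_subset_left)).encard_le_eRk_of_subset
            (coe_subset.2 inter_subset_right)
      _ = Fintype.card ι * M.eRk K := by rw [sum_const, card_univ, nsmul_eq_mul]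
  · intro hcond
    have huniv : M.RadoCondition J fun _ => (univ : Finset ι) := fun K hKJ => by
      simp only [listRank, mem_univ, filter_true, sum_const, card_univ, nsmul_eq_mul]
      exact hcond K hKJ
    obtain ⟨L, -, hL, hL1⟩ := huniv.exists_card_le_one
    refine ⟨fun i => {x ∈ J | i ∈ L x}, fun i => filter_subset _ _, fun x hx => ?_,
      fun i k hik => ?_, hL.indep_filter_mem hL1⟩
    · obtain ⟨i, hi⟩ := hL.nonempty hx
      exact ⟨i, mem_filter.2 ⟨hx, hi⟩⟩
    · refine disjoint_left.2 fun x hxi hxk => hik ?_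
      rw [mem_filter] at hxi hxk
      exact card_le_one.1 (hL1 x hxi.1) i hxi.2 k hxk.2

theorem cast_matroidRank_eq_eRk [DecidableEq α] (M : Matroid α) (E : Finset α) :
    (matroidRank (fun F => M.Indep ↑F) E : ℕ∞) = M.eRk ↑E := by
  classical
  refine le_antisymm ?_ (eRk_le_iff.2 fun I hIE hI => ?_)
  · obtain ⟨F, hF, hFsup⟩ :=
      exists_mem_eq_sup (E.powerset.filter fun F : Finset α => M.Indep ↑F)
        ⟨∅, mem_filter.2 ⟨empty_mem_powerset E, by simp⟩⟩ Finset.card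
    rw [mem_filter, mem_powerset] at hF
    rw [matroidRank, hFsup, ← Set.encard_coe_eq_coe_finsetCard]
    exact hF.2.encard_le_eRk_of_subset (coe_subset.2 hF.1)
  · obtain ⟨F, rfl⟩ := (E.finite_toSet.subset hIE).exists_finset_coe
    rw [Set.encard_coe_eq_coe_finsetCard, Nat.cast_le]
    exact le_sup (f := Finset.card) (mem_filter.2 ⟨mem_powerset.2 (coe_subset.1 hIE), hI⟩)

end Matroid

theorem radoHorn_matroid_general {X : Type*} [DecidableEq X]
    (Indep : Finset X → Prop)
    (h_empty : Indep ∅)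
    (h_subset : ∀ I₁ I₂ : Finset X, Indep I₁ → I₂ ⊆ I₁ → Indep I₂)
    (h_exchange : ∀ I₁ I₂ : Finset X, Indep I₁ → Indep I₂ → I₁.card < I₂.card →
      ∃ x ∈ I₂ \ I₁, Indep (insert x I₁))
    (R : ℕ) (J : Finset X) :
    (∃ A : Fin R → Finset X,
        (∀ r, A r ⊆ J) ∧ (∀ x ∈ J, ∃ r, x ∈ A r) ∧
        Pairwise (fun r s => Disjoint (A r) (A s)) ∧
        ∀ r, Indep (A r)) ↔
      ∀ E ⊆ J, E.card ≤ R * matroidRank Indep E := by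
  let M : Matroid X := (IndepMatroid.ofFinset Set.univ Indep h_empty
    (fun I₁ I₂ h hsub => h_subset I₂ I₁ h hsub)
    (fun I₁ I₂ h₁ h₂ hlt => by
      obtain ⟨x, hx, hins⟩ := h_exchange I₁ I₂ h₁ h₂ hlt
      exact ⟨x, (mem_sdiff.1 hx).1, (mem_sdiff.1 hx).2, hins⟩)
    (fun _ _ => Set.subset_univ _)).matroid
  have hIndep : (fun F : Finset X => M.Indep ↑F) = Indep := by
    ext F
    simp [M]
  have hrank (E : Finset X) : (matroidRank Indep E : ℕ∞) = M.eRk ↑E :=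
    hIndep ▸ M.cast_matroidRank_eq_eRk E
  simp only [← hIndep, M.exists_indep_partition_iff, Fintype.card_fin]
  refine forall₂_congr fun E _ => ?_
  rw [hIndep, ← hrank]
  norm_cast

/-- Rado–Horn for matroids: given a matroid `(X, Indep)` and a positive
integer `R`, a finite set `J ⊆ X` can be partitioned into `R` independent sets iff
`|E| ≤ R · rank(E)` for every `E ⊆ J`. -/
theorem radoHorn_matroid {X : Type*} [Fintype X] [DecidableEq X]
    (Indep : Finset X → Prop)
    (h_empty : Indep ∅)
    (h_subset : ∀ I₁ I₂ : Finset X, Indep I₁ → I₂ ⊆ I₁ → Indep I₂)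
    (h_exchange : ∀ I₁ I₂ : Finset X, Indep I₁ → Indep I₂ → I₁.card < I₂.card →
      ∃ x ∈ I₂ \ I₁, Indep (insert x I₁))
    (R : ℕ) (hR : 0 < R) (J : Finset X) :
    (∃ A : Fin R → Finset X,
        (∀ r, A r ⊆ J) ∧ (∀ x ∈ J, ∃ r, x ∈ A r) ∧
        Pairwise (fun r s => Disjoint (A r) (A s)) ∧
        ∀ r, Indep (A r)) ↔
      ∀ E ⊆ J, E.card ≤ R * matroidRank Indep E :=
  radoHorn_matroid_general Indep h_empty h_subset h_exchange R J
end

section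
/- Let {f_i}_{i∈I} be a finite family of vectors in a vector space X and M a positive integer. There exists a partition {I_j}_{j=1}^M of I with each {f_i}_{i∈I_j} linearly independent if and only if for every nonempty J ⊆ I, |J| ≤ M · dim span{f_i}_{i∈J}. -/
/-!
Rado–Horn is Rado's transversal theorem for the linear matroid of the vectors
`Pi.single k (f i)` in `Fin M → X`, with the sets `A i = {i} × Fin M`: an independent
transversal chooses a colour `k` for every `i`, and its colour classes are independent.
Since `⋃_{i ∈ J} A i` spans the product of `M` copies of `span (f '' J)`, Rado's condition
`|J| ≤ rank (⋃_{i ∈ J} A i)` is exactly the hypothesis `|J| ≤ M · dim span (f '' J)`.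

Rado's theorem is proved by shrinking the sets until they are singletons. If `x ≠ y` lie in
`A i` and removing `x` breaks the condition at `J₁` while removing `y` breaks it at `J₂`, then
`i ∈ J₁ ∩ J₂`, and submodularity of the rank makes the original condition fail at
`J₁ ∪ J₂` or at `(J₁ ∩ J₂) \ {i}`.
-/

open Module Submodule Set Function

section Rank

variable {K V : Type*} [Field K] [AddCommGroup V] [Module K V]

theorem Set.finrank_mono_of_finite {s t : Set V} (ht : t.Finite) (hst : s ⊆ t) :
    s.finrank K ≤ t.finrank K :=
  haveI := FiniteDimensional.span_of_finite K ht
  Submodule.finrank_mono (span_mono hst)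

theorem Set.finrank_union_add_finrank_inter_le {s t : Set V} (hs : s.Finite) (ht : t.Finite) :
    (s ∪ t).finrank K + (s ∩ t).finrank K ≤ s.finrank K + t.finrank K := by
  have := FiniteDimensional.span_of_finite K hs
  have := FiniteDimensional.span_of_finite K ht
  calc finrank K (span K (s ∪ t)) + finrank K (span K (s ∩ t))
      ≤ finrank K ↥(span K s ⊔ span K t) + finrank K ↥(span K s ⊓ span K t) := by
        rw [span_union]
        gcongr
        exact Submodule.finrank_mono
          (le_inf (span_mono inter_subset_left) (span_mono inter_subset_right))
    _ = s.finrank K + t.finrank K := finrank_sup_add_finrank_inf_eq _ _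

theorem LinearIndepOn.ncard_le_finrank_image {ι : Type*} {f : ι → V} {s t : Set ι}
    (hs : LinearIndepOn K f s) (hst : s ⊆ t) (ht : t.Finite) :
    s.ncard ≤ (f '' t).finrank K := by
  have := (ht.subset hst).fintype
  calc s.ncard = Fintype.card s := (fintypeCard_eq_ncard s).symm
    _ ≤ (f '' s).finrank K := by
      rw [← range_domRestrict]; exact linearIndependent_iff_card_le_finrank_span.1 hs
    _ ≤ (f '' t).finrank K := Set.finrank_mono_of_finite (ht.image f) (image_mono hst)

end Rank

section Rado

variable {K V E ι : Type*} [Field K] [AddCommGroup V] [Module K V] [DecidableEq E]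

variable (K) in
def RadoCondition (g : E → V) (A : ι → Finset E) : Prop :=
  ∀ J : Finset ι, J.card ≤ (g '' ↑(J.biUnion A)).finrank K

variable {g : E → V} {A : ι → Finset E}

theorem Finset.biUnion_update_of_notMem [DecidableEq ι] {J : Finset ι} {i : ι} (hi : i ∉ J)
    (A : ι → Finset E) (s : Finset E) : J.biUnion (update A i s) = J.biUnion A :=
  Finset.biUnion_congr rfl fun _ hj => update_of_ne (ne_of_mem_of_not_mem hj hi) _ _

theorem Finset.biUnion_update_of_mem [DecidableEq ι] {J : Finset ι} {i : ι} (hi : i ∈ J)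
    (A : ι → Finset E) (s : Finset E) :
    J.biUnion (update A i s) = (J.erase i).biUnion A ∪ s := by
  rw [← Finset.insert_erase hi, Finset.biUnion_insert, update_self,
    Finset.biUnion_update_of_notMem (Finset.notMem_erase i J), Finset.union_comm,
    Finset.erase_insert (Finset.notMem_erase i J)]

theorem RadoCondition.update_erase_or [DecidableEq ι] (hA : RadoCondition K g A) (i : ι)
    {x y : E} (hxy : x ≠ y) :
    RadoCondition K g (update A i ((A i).erase x)) ∨
      RadoCondition K g (update A i ((A i).erase y)) := by
  by_contra! h
  simp only [RadoCondition, not_forall, not_le] at h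
  obtain ⟨⟨J₁, hJ₁⟩, ⟨J₂, hJ₂⟩⟩ := h
  have mem_of_violation {J : Finset ι} {z : E}
      (hJ : (g '' ↑(J.biUnion (update A i ((A i).erase z)))).finrank K < J.card) : i ∈ J := by
    by_contra hi
    rw [Finset.biUnion_update_of_notMem hi] at hJ
    exact (hA J).not_gt hJ
  have hi₁ := mem_of_violation hJ₁
  have hi₂ := mem_of_violation hJ₂
  rw [Finset.biUnion_update_of_mem hi₁] at hJ₁
  rw [Finset.biUnion_update_of_mem hi₂] at hJ₂
  set S₁ := (J₁.erase i).biUnion A ∪ (A i).erase x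
  set S₂ := (J₂.erase i).biUnion A ∪ (A i).erase y
  have hfin₁ : (g '' ↑S₁).Finite := S₁.finite_toSet.image g
  have hfin₂ : (g '' ↑S₂).Finite := S₂.finite_toSet.image g
  have hunion :
      (g '' ↑((J₁ ∪ J₂).biUnion A)).finrank K ≤ (g '' ↑S₁ ∪ g '' ↑S₂).finrank K := by
    refine Set.finrank_mono_of_finite (hfin₁.union hfin₂) ?_
    rw [← image_union, ← Finset.coe_union]
    refine image_mono (Finset.coe_subset.2 fun e he => ?_)
    simp only [S₁, S₂, Finset.mem_biUnion, Finset.mem_union, Finset.mem_erase] at he ⊢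
    grind
  have hinter : (g '' ↑(((J₁ ∩ J₂).erase i).biUnion A)).finrank K ≤
      (g '' ↑S₁ ∩ g '' ↑S₂).finrank K := by
    refine Set.finrank_mono_of_finite (hfin₁.inter_of_left _) ?_
    refine (image_mono ?_).trans (image_inter_subset _ _ _)
    rw [← Finset.coe_inter]
    refine Finset.coe_subset.2 fun e he => ?_
    simp only [S₁, S₂, Finset.mem_biUnion, Finset.mem_union, Finset.mem_inter,
      Finset.mem_erase] at he ⊢
    grind
  have hcard := Finset.card_union_add_card_inter J₁ J₂
  have herase := Finset.card_erase_of_mem (Finset.mem_inter.2 ⟨hi₁, hi₂⟩)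
  have := Set.finrank_union_add_finrank_inter_le (K := K) hfin₁ hfin₂
  have := hA (J₁ ∪ J₂)
  have := hA ((J₁ ∩ J₂).erase i)
  have := (J₁ ∩ J₂).card_pos.2 ⟨i, Finset.mem_inter.2 ⟨hi₁, hi₂⟩⟩
  omega

theorem RadoCondition.exists_of_card_le_one [Fintype ι] (hA : RadoCondition K g A)
    (hA₁ : ∀ i, (A i).card ≤ 1) :
    ∃ e : ι → E, (∀ i, e i ∈ A i) ∧ LinearIndependent K (g ∘ e) := by
  classical
  have hne (i : ι) : (A i).Nonempty := by
    by_contra h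
    simpa [Finset.not_nonempty_iff_eq_empty.1 h] using hA {i}
  choose e he using fun i => Finset.card_eq_one.1 ((hA₁ i).antisymm (hne i).card_pos)
  refine ⟨e, fun i => by simp [he i], ?_⟩
  rw [linearIndependent_iff_card_le_finrank_span]
  have hunion : (Finset.univ : Finset ι).biUnion A = Finset.univ.image e := by
    rw [← Finset.biUnion_singleton]
    exact Finset.biUnion_congr rfl fun i _ => he i
  simpa [hunion, ← image_univ, image_image] using hA Finset.univ

theorem RadoCondition.exists_linearIndependent_transversal [Fintype ι]
    (hA : RadoCondition K g A) :
    ∃ e : ι → E, (∀ i, e i ∈ A i) ∧ LinearIndependent K (g ∘ e) := by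
  classical
  induction hn : ∑ i, (A i).card using Nat.strong_induction_on generalizing A with
  | _ n ih =>
  by_cases hA₁ : ∀ i, (A i).card ≤ 1
  · exact hA.exists_of_card_le_one hA₁
  simp only [not_forall, not_le] at hA₁
  obtain ⟨i, hi⟩ := hA₁
  obtain ⟨x, hx, y, hy, hxy⟩ := Finset.one_lt_card.1 hi
  have of_erase {z : E} (hz : z ∈ A i) (hAz : RadoCondition K g (update A i ((A i).erase z))) :
      ∃ e : ι → E, (∀ i, e i ∈ A i) ∧ LinearIndependent K (g ∘ e) := by
    have hsub (j : ι) : update A i ((A i).erase z) j ⊆ A j := by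
      rcases eq_or_ne j i with rfl | hj
      · simpa using Finset.erase_subset z (A j)
      · simp [update_of_ne hj]
    have hlt : ∑ j, (update A i ((A i).erase z) j).card < n := hn ▸
      Finset.sum_lt_sum (fun j _ => Finset.card_le_card (hsub j))
        ⟨i, Finset.mem_univ i, by simpa using Finset.card_erase_lt_of_mem hz⟩
    obtain ⟨e, he, hli⟩ := ih _ hlt hAz rfl
    exact ⟨e, fun j => hsub j (he j), hli⟩
  rcases hA.update_erase_or i hxy with h | h
  exacts [of_erase hx h, of_erase hy h]

end Rado

section Colouring

variable {K X I κ : Type*} [Field K] [AddCommGroup X] [Module K X]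

theorem Submodule.finrank_pi_univ_const [Fintype κ] (W : Submodule K X) [FiniteDimensional K W] :
    finrank K (pi univ fun _ : κ => W) = Fintype.card κ * finrank K W := by
  have hrange : pi univ (fun _ : κ => W) =
      LinearMap.range (LinearMap.piMap fun _ : κ => W.subtype) := by
    ext v
    simp only [mem_pi, mem_univ, true_implies, LinearMap.mem_range, LinearMap.coe_piMap,
      funext_iff, Pi.map_apply, subtype_apply]
    exact ⟨fun hv => ⟨fun c => ⟨v c, hv c⟩, fun _ => rfl⟩,
      by rintro ⟨w, hw⟩ c; exact hw c ▸ (w c).2⟩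
  rw [hrange, LinearMap.finrank_range_of_inj (Injective.piMap fun _ => W.injective_subtype),
    Module.finrank_pi_fintype, Finset.sum_const, Finset.card_univ, smul_eq_mul]

theorem span_image_pi_single_prod_univ [Finite κ] [DecidableEq κ] (f : I → X) (s : Set I) :
    span K ((fun p : I × κ => Pi.single p.2 (f p.1)) '' (s ×ˢ univ)) =
      Submodule.pi univ fun _ => span K (f '' s) := by
  refine le_antisymm (span_le.2 ?_) ?_
  · rintro _ ⟨⟨i, c⟩, ⟨hi, -⟩, rfl⟩ c' -
    rcases eq_or_ne c' c with rfl | hc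
    · simpa using subset_span (mem_image_of_mem f hi)
    · simp [hc]
  · rw [← iSup_map_single]
    refine iSup_le fun c => ?_
    rw [map_span]
    refine span_mono ?_
    rintro _ ⟨_, ⟨i, hi, rfl⟩, rfl⟩
    exact ⟨(i, c), ⟨hi, mem_univ c⟩, rfl⟩

theorem LinearIndependent.linearIndepOn_fiber_of_pi_single [DecidableEq κ] {f : I → X}
    {c : I → κ} (h : LinearIndependent K fun i => (Pi.single (c i) (f i) : κ → X)) (k : κ) :
    LinearIndepOn K f (c ⁻¹' {k}) := by
  refine LinearIndependent.of_comp (LinearMap.single K (fun _ => X) k) ?_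
  convert h.comp _ Subtype.val_injective using 1
  · ext ⟨i, hi⟩
    simp [show c i = k from hi]
  · rfl

theorem ncard_le_mul_finrank_of_iUnion_eq_univ [Fintype κ] {f : I → X} {A : κ → Set I}
    (hcover : ⋃ k, A k = univ) (hA : ∀ k, LinearIndepOn K f (A k)) {s : Set I} (hs : s.Finite) :
    s.ncard ≤ Fintype.card κ * (f '' s).finrank K :=
  calc s.ncard = (⋃ k, A k ∩ s).ncard := by rw [← iUnion_inter, hcover, univ_inter]
    _ ≤ ∑ k, (A k ∩ s).ncard := ncard_iUnion_le_of_fintype _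
    _ ≤ ∑ _k : κ, (f '' s).finrank K := Finset.sum_le_sum fun k _ =>
      ((hA k).mono inter_subset_left).ncard_le_finrank_image inter_subset_right hs
    _ = Fintype.card κ * (f '' s).finrank K := by simp

theorem exists_linearIndepOn_fiber_of_card_le [Fintype I] [Fintype κ] {f : I → X}
    (h : ∀ J : Finset I, J.card ≤ Fintype.card κ * (f '' J).finrank K) :
    ∃ c : I → κ, ∀ k, LinearIndepOn K f (c ⁻¹' {k}) := by
  classical
  let g : I × κ → κ → X := fun p => Pi.single p.2 (f p.1)
  have hrado : RadoCondition K g fun i => {i} ×ˢ Finset.univ := by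
    intro J
    have hunion : J.biUnion (fun i => {i} ×ˢ Finset.univ) = J ×ˢ (Finset.univ : Finset κ) := by
      ext ⟨i, k⟩; simp
    have := FiniteDimensional.span_of_finite K (J.finite_toSet.image f)
    rw [hunion, Finset.coe_product, Finset.coe_univ, Set.finrank, span_image_pi_single_prod_univ,
      Submodule.finrank_pi_univ_const]
    exact h J
  obtain ⟨e, he, hli⟩ := hrado.exists_linearIndependent_transversal
  have he₁ (i : I) : (e i).1 = i := by simpa using (Finset.mem_product.1 (he i)).1
  refine ⟨fun i => (e i).2, LinearIndependent.linearIndepOn_fiber_of_pi_single ?_⟩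
  simpa [g, comp_def, he₁] using hli

end Colouring

theorem radoHorn_linear_general {K X : Type*} [Field K] [AddCommGroup X] [Module K X]
    {I : Type*} [Fintype I] (f : I → X) (M : ℕ) :
    (∃ A : Fin M → Set I,
        (⋃ j, A j) = Set.univ ∧ Pairwise (Function.onFun Disjoint A) ∧
        ∀ j, LinearIndependent K ((A j).restrict f)) ↔
      ∀ Js : Set I, Js.Nonempty →
        Js.ncard ≤ M * Module.finrank K (Submodule.span K (f '' Js)) := by
  constructor
  · rintro ⟨A, hcover, -, hA⟩ Js -
    simpa [Set.finrank] using ncard_le_mul_finrank_of_iUnion_eq_univ hcover hA Js.toFinite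
  · intro h
    obtain ⟨c, hc⟩ := exists_linearIndepOn_fiber_of_card_le (K := K) (κ := Fin M) (f := f)
      fun J => by
        rcases J.eq_empty_or_nonempty with rfl | hJ
        · simp
        · simpa [Set.finrank] using h J (Finset.coe_nonempty.2 hJ)
    exact ⟨fun k => c ⁻¹' {k}, iUnion_eq_univ_iff.2 fun i => ⟨c i, rfl⟩,
      pairwise_disjoint_fiber c, hc⟩

/-- Rado–Horn, linear algebra version: A finite family `{f i}_{i ∈ I}`
of vectors can be partitioned into `M` linearly independent sets iff for every
nonempty `J ⊆ I`, `|J| ≤ M · dim span{f i}_{i ∈ J}`. -/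
theorem radoHorn_linear {K X : Type*} [Field K] [AddCommGroup X] [Module K X]
    {I : Type*} [Fintype I] (f : I → X) (M : ℕ) (hM : 0 < M) :
    (∃ A : Fin M → Set I,
        (⋃ j, A j) = Set.univ ∧ Pairwise (Function.onFun Disjoint A) ∧
        ∀ j, LinearIndependent K ((A j).restrict f)) ↔
      ∀ Js : Set I, Js.Nonempty →
        Js.ncard ≤ M * Module.finrank K (Submodule.span K (f '' Js)) :=
  radoHorn_linear_general f M
end

section
/- Let r, N be natural numbers and let {f_i}_{i=1}^{rN} be an equal-norm Parseval frame for an N-dimensional Hilbert space H_N. Then {1, …, rN} can be partitioned into r sets each of which indexes a linearly independent spanning set (i.e., a basis) of H_N. -/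
open scoped InnerProductSpace

/-!
For a Parseval frame, `∑ᵢ ‖fᵢ‖² = N`, so equal norms force `‖fᵢ‖² = 1/r`. Expanding each `fᵢ`,
`i ∈ s`, in an orthonormal basis of `W = span {fᵢ | i ∈ s}` and applying the Parseval identity to
the basis vectors gives `∑_{i ∈ s} ‖fᵢ‖² ≤ dim W`, i.e. `|s| ≤ r · dim W`. By the Rado–Horn
theorem this counting condition yields a partition into `r` linearly independent sets; each has at
most `N` elements and together they have `rN`, so each is a basis.

For Rado–Horn, colour the vectors so that the sum over colours of the dimensions of the spans of
the parts is maximal. Moving a vector that is dependent in its part to another part then changes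
none of the spans, so such moves can be iterated. Let `D` be the set of vectors that are dependent
in some configuration reachable this way. The spans of the sets `D ∩ part j` are invariant under
moves and each contains `span D`, so `|D ∩ part j| ≥ dim span D` for every colour, strictly for
the part of an initially dependent vector; summing contradicts `|D| ≤ r · dim span D`.
-/

open Module Submodule Finset Function Relation

section SpanImage

variable {K V ι : Type*} [DivisionRing K] [AddCommGroup V] [Module K V] {f : ι → V}

instance (f : ι → V) (s : Finset ι) : FiniteDimensional K (span K (f '' s)) :=
  FiniteDimensional.span_of_finite K (s.finite_toSet.image f)

theorem finrank_span_image_finset_le_card (f : ι → V) (s : Finset ι) :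
    finrank K (span K (f '' s)) ≤ #s := by
  classical
  rw [← coe_image]
  exact (finrank_span_finset_le_card _).trans card_image_le

variable [DecidableEq ι]

theorem span_image_erase_eq {s : Finset ι} {i : ι} (h : f i ∈ span K (f '' ↑(s.erase i))) :
    span K (f '' ↑(s.erase i)) = span K (f '' s) := by
  by_cases hi : i ∈ s
  · conv_rhs => rw [← insert_erase hi, coe_insert, Set.image_insert_eq, span_insert_eq_span h]
  · rw [erase_eq_of_notMem hi]

theorem finrank_span_image_finset_lt_card {s : Finset ι} {i : ι} (hi : i ∈ s)
    (h : f i ∈ span K (f '' ↑(s.erase i))) : finrank K (span K (f '' s)) < #s := by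
  rw [← span_image_erase_eq h, ← card_erase_add_one hi]
  exact Nat.lt_succ_of_le (finrank_span_image_finset_le_card f _)

theorem span_image_lt_span_image_insert {s : Finset ι} {i : ι} (h : f i ∉ span K (f '' s)) :
    span K (f '' s) < span K (f '' ↑(insert i s)) := by
  rw [coe_insert, Set.image_insert_eq]
  exact (span_mono (Set.subset_insert _ _)).lt_of_ne fun heq =>
    h (heq ▸ subset_span (Set.mem_insert _ _))

theorem exists_subset_mem_span_image_forall_mem_span_insert {x : V} {s : Finset ι}
    (hx : x ∈ span K (f '' s)) :
    ∃ t ⊆ s, x ∈ span K (f '' t) ∧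
      ∀ y ∈ t, f y ∈ span K (insert x (f '' ↑(t.erase y))) := by
  obtain ⟨t, hts, hxt, hmin⟩ :=
    exists_minimal_le_of_wellFoundedLT (fun t : Finset ι => x ∈ span K (f '' t)) s hx
  refine ⟨t, hts, hxt, fun y hy => mem_span_insert_exchange ?_ fun hxy => ?_⟩
  · rwa [← Set.image_insert_eq, ← coe_insert, insert_erase hy]
  · exact notMem_erase y t (hmin hxy (erase_subset y t) hy)

end SpanImage

namespace RadoHorn

variable {K V ι κ : Type*} [DivisionRing K] [AddCommGroup V] [Module K V]
  [Fintype ι] [DecidableEq κ] {f : ι → V}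

def part (g : ι → κ) (j : κ) : Finset ι := {i | g i = j}

theorem mem_part {g : ι → κ} {i : ι} {j : κ} : i ∈ part g j ↔ g i = j := by
  simp [part]

theorem coe_part (g : ι → κ) (j : κ) : (part g j : Set ι) = g ⁻¹' {j} := by
  ext; simp [part]

variable [DecidableEq ι]

theorem part_update_self (g : ι → κ) (i : ι) (j : κ) :
    part (update g i j) j = insert i (part g j) := by
  ext x; by_cases hx : x = i <;> simp [part, hx]

theorem part_update_of_ne {j' j : κ} (h : j' ≠ j) (g : ι → κ) (i : ι) :
    part (update g i j) j' = (part g j').erase i := by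
  ext x; by_cases hx : x = i <;> simp [part, hx, h.symm]

variable (K f)

def Dependent (g : ι → κ) (i : ι) : Prop := f i ∈ span K (f '' ↑((part g (g i)).erase i))

def Move (g g' : ι → κ) : Prop := ∃ i j, Dependent K f g i ∧ g' = update g i j

open Classical in
noncomputable def reachableDependents (g₀ : ι → κ) : Finset ι :=
  {i | ∃ g, ReflTransGen (Move K f) g₀ g ∧ Dependent K f g i}

variable {K f}

theorem mem_reachableDependents {g₀ : ι → κ} {i : ι} :
    i ∈ reachableDependents K f g₀ ↔
      ∃ g, ReflTransGen (Move K f) g₀ g ∧ Dependent K f g i := by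
  simp [reachableDependents]

theorem span_part_erase {g : ι → κ} {i : ι} (hi : Dependent K f g i) (j : κ) :
    span K (f '' ↑((part g j).erase i)) = span K (f '' part g j) := by
  by_cases hj : j = g i
  · exact hj ▸ span_image_erase_eq hi
  · rw [erase_eq_of_notMem (mt mem_part.1 (Ne.symm hj))]

/-- By the exchange lemma, every member of a minimal subset of the part spanning `f i` is itself
dependent in `g`, so that subset lies in `reachableDependents`. -/
theorem mem_span_reachableDependents {g₀ g : ι → κ} {i : ι}
    (hr : ReflTransGen (Move K f) g₀ g) (hi : Dependent K f g i) :
    f i ∈ span K (f '' ↑((reachableDependents K f g₀ ∩ part g (g i)).erase i)) := by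
  obtain ⟨t, hts, hit, hexch⟩ := exists_subset_mem_span_image_forall_mem_span_insert hi
  refine span_mono (Set.image_mono fun y hy => ?_) hit
  obtain ⟨hyi, hy_part⟩ := mem_erase.1 (hts hy)
  have hy_dep : Dependent K f g y := by
    refine span_mono ?_ (hexch y hy)
    rw [mem_part.1 hy_part, Set.insert_subset_iff]
    refine ⟨⟨i, by simp [hyi.symm, mem_part], rfl⟩, Set.image_mono ?_⟩
    exact coe_subset.2 (erase_subset_erase y fun x hx => (mem_erase.1 (hts hx)).2)
  have hy_mem := mem_reachableDependents.2 ⟨g, hr, hy_dep⟩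
  exact mem_erase.2 ⟨hyi, mem_inter.2 ⟨hy_mem, hy_part⟩⟩

theorem span_inter_part_le_of_move {g₀ g : ι → κ} {i : ι}
    (hr : ReflTransGen (Move K f) g₀ g) (hi : Dependent K f g i) (j j' : κ) :
    span K (f '' ↑(reachableDependents K f g₀ ∩ part g j')) ≤
      span K (f '' ↑(reachableDependents K f g₀ ∩ part (update g i j) j')) := by
  by_cases h : j' = j
  · subst h
    rw [part_update_self]
    exact span_mono <| Set.image_mono <| coe_subset.2 <|
      inter_subset_inter_left (subset_insert _ _)
  · rw [part_update_of_ne h, inter_erase]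
    by_cases hj : j' = g i
    · subst hj
      exact (span_image_erase_eq (mem_span_reachableDependents hr hi)).ge
    · rw [erase_eq_of_notMem fun hmem => hj (mem_part.1 (mem_inter.1 hmem).2).symm]

variable [Fintype κ]

variable (K f) in
noncomputable def rankSum (g : ι → κ) : ℕ := ∑ j, finrank K (span K (f '' part g j))

variable (K f) in
def Optimal (g : ι → κ) : Prop := ∀ g' : ι → κ, rankSum K f g' ≤ rankSum K f g

theorem card_eq_sum_card_inter_part (s : Finset ι) (g : ι → κ) :
    #s = ∑ j, #(s ∩ part g j) := by
  rw [card_eq_sum_card_fiberwise fun i _ => mem_univ (g i)]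
  congr! 2 with j
  ext; simp [part]

namespace Optimal

variable {g : ι → κ} {i : ι}

theorem mem_span_part (hg : Optimal K f g) (hi : Dependent K f g i) (j : κ) :
    f i ∈ span K (f '' part g j) := by
  by_contra hj
  -- otherwise moving `i` to part `j` keeps every other span and enlarges that of part `j`
  refine (hg (update g i j)).not_gt (sum_lt_sum (fun j' _ => ?_) ⟨j, mem_univ j, ?_⟩)
  · by_cases h : j' = j
    · subst h
      rw [part_update_self]
      exact finrank_mono (span_mono (Set.image_mono (coe_subset.2 (subset_insert _ _))))
    · rw [part_update_of_ne h, span_part_erase hi]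
  · rw [part_update_self]
    exact finrank_lt_finrank_of_lt (span_image_lt_span_image_insert hj)

theorem span_part_update (hg : Optimal K f g) (hi : Dependent K f g i) (j j' : κ) :
    span K (f '' part (update g i j) j') = span K (f '' part g j') := by
  by_cases h : j' = j
  · subst h
    rw [part_update_self, coe_insert, Set.image_insert_eq,
      span_insert_eq_span (hg.mem_span_part hi _)]
  · rw [part_update_of_ne h, span_part_erase hi]

theorem of_move {g' : ι → κ} (hg : Optimal K f g) (h : Move K f g g') : Optimal K f g' := by
  obtain ⟨i, j, hi, rfl⟩ := h
  have hsum : rankSum K f (update g i j) = rankSum K f g :=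
    sum_congr rfl fun j' _ => by rw [hg.span_part_update hi]
  exact fun g' => hsum ▸ hg g'

theorem dependent_update (hg : Optimal K f g) (hi : Dependent K f g i) (j : κ) :
    Dependent K f (update g i j) i := by
  rw [Dependent, update_self, part_update_self, erase_insert_eq_erase, span_part_erase hi]
  exact hg.mem_span_part hi j

theorem of_reflTransGen {g₀ : ι → κ} (hg₀ : Optimal K f g₀)
    (h : ReflTransGen (Move K f) g₀ g) : Optimal K f g := by
  induction h with
  | refl => exact hg₀
  | tail _ hmove ih => exact ih.of_move hmove

theorem span_inter_part_eq {g₀ g : ι → κ} (hg₀ : Optimal K f g₀)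
    (hr : ReflTransGen (Move K f) g₀ g) (j : κ) :
    span K (f '' ↑(reachableDependents K f g₀ ∩ part g j)) =
      span K (f '' ↑(reachableDependents K f g₀ ∩ part g₀ j)) := by
  induction hr with
  | refl => rfl
  | @tail g g' hr hmove ih =>
    obtain ⟨i, k, hi, rfl⟩ := hmove
    -- moving `i` back to `g i` is again a move, so the inequality holds both ways
    have hback := span_inter_part_le_of_move (hr.tail ⟨i, k, hi, rfl⟩)
      ((hg₀.of_reflTransGen hr).dependent_update hi k) (g i) j
    rw [update_idem, update_eq_self] at hback
    exact (le_antisymm hback (span_inter_part_le_of_move hr hi k j)).trans ih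

theorem mem_span_inter_part {g₀ : ι → κ} (hg₀ : Optimal K f g₀) {i : ι}
    (hi : i ∈ reachableDependents K f g₀) (j : κ) :
    f i ∈ span K (f '' ↑(reachableDependents K f g₀ ∩ part g₀ j)) := by
  obtain ⟨g, hr, hdep⟩ := mem_reachableDependents.1 hi
  have hr' : ReflTransGen (Move K f) g₀ (update g i j) := hr.tail ⟨i, j, hdep, rfl⟩
  have hmem :=
    mem_span_reachableDependents hr' ((hg₀.of_reflTransGen hr).dependent_update hdep j)
  rw [update_self] at hmem
  rw [← hg₀.span_inter_part_eq hr']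
  exact span_mono (Set.image_mono (coe_subset.2 (erase_subset _ _))) hmem

theorem linearIndepOn_part {g₀ : ι → κ} (hg₀ : Optimal K f g₀)
    (hcard : ∀ s : Finset ι, #s ≤ Fintype.card κ * finrank K (span K (f '' s))) (j : κ) :
    LinearIndepOn K f (part g₀ j) := by
  rw [linearIndepOn_iff_notMem_span]
  by_contra! ⟨i₀, hi₀, hdep⟩
  rw [← coe_erase, ← mem_part.1 hi₀] at hdep
  set D := reachableDependents K f g₀
  set W := span K (f '' D)
  have hW (j : κ) : W ≤ span K (f '' ↑(D ∩ part g₀ j)) :=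
    span_le.2 <| Set.image_subset_iff.2 fun i hi => hg₀.mem_span_inter_part hi j
  have hle (j : κ) : finrank K W ≤ #(D ∩ part g₀ j) :=
    (finrank_mono (hW j)).trans (finrank_span_image_finset_le_card f _)
  have hlt : finrank K W < #(D ∩ part g₀ (g₀ i₀)) :=
    (finrank_mono (hW _)).trans_lt <| finrank_span_image_finset_lt_card
      (mem_inter.2 ⟨mem_reachableDependents.2 ⟨g₀, .refl, hdep⟩, mem_part.2 rfl⟩)
      (mem_span_reachableDependents .refl hdep)
  have := calc
    Fintype.card κ * finrank K W = ∑ _j : κ, finrank K W := by simp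
    _ < ∑ j, #(D ∩ part g₀ j) := sum_lt_sum (fun j _ => hle j) ⟨_, mem_univ _, hlt⟩
    _ = #D := (card_eq_sum_card_inter_part D g₀).symm
    _ ≤ Fintype.card κ * finrank K W := hcard D
  exact this.false

end Optimal

end RadoHorn

theorem exists_linearIndepOn_fibers_of_card_le_mul_finrank {K V ι κ : Type*}
    [DivisionRing K] [AddCommGroup V] [Module K V] [Fintype ι] [Fintype κ] (f : ι → V)
    (hcard : ∀ s : Finset ι, #s ≤ Fintype.card κ * finrank K (span K (f '' s))) :
    ∃ g : ι → κ, ∀ j, LinearIndepOn K f (g ⁻¹' {j}) := by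
  classical
  have : Nonempty (ι → κ) := by
    refine (isEmpty_or_nonempty κ).elim (fun hκ => ?_) fun ⟨j⟩ => ⟨fun _ => j⟩
    have : IsEmpty ι := ⟨fun i => by simpa using hcard {i}⟩
    infer_instance
  obtain ⟨g₀, hg₀⟩ := Finite.exists_max (RadoHorn.rankSum K f (κ := κ))
  exact ⟨g₀, fun j => RadoHorn.coe_part g₀ j ▸ RadoHorn.Optimal.linearIndepOn_part hg₀ hcard j⟩

section ParsevalFrame

variable {𝕜 H ι : Type*} [RCLike 𝕜] [NormedAddCommGroup H] [InnerProductSpace 𝕜 H]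
  [Fintype ι] {f : ι → H}

theorem sum_norm_sq_le_finrank_of_parseval (hf : ∀ x : H, ∑ i, ‖⟪x, f i⟫_𝕜‖ ^ 2 = ‖x‖ ^ 2)
    (W : Submodule 𝕜 H) [FiniteDimensional 𝕜 W] {s : Finset ι} (hs : ∀ i ∈ s, f i ∈ W) :
    ∑ i ∈ s, ‖f i‖ ^ 2 ≤ finrank 𝕜 W := by
  let b := stdOrthonormalBasis 𝕜 W
  calc ∑ i ∈ s, ‖f i‖ ^ 2 = ∑ k, ∑ i ∈ s, ‖⟪(b k : H), f i⟫_𝕜‖ ^ 2 := by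
        rw [sum_comm]
        refine sum_congr rfl fun i hi => ?_
        exact (b.sum_sq_norm_inner_right ⟨f i, hs i hi⟩).symm
    _ ≤ ∑ k, ∑ i, ‖⟪(b k : H), f i⟫_𝕜‖ ^ 2 :=
        sum_le_sum fun k _ =>
          sum_le_sum_of_subset_of_nonneg (subset_univ s) fun _ _ _ => by positivity
    _ = finrank 𝕜 W := by
        simp [hf, Submodule.norm_coe, b.orthonormal.1]

theorem sum_norm_sq_eq_finrank_of_parseval [FiniteDimensional 𝕜 H]
    (hf : ∀ x : H, ∑ i, ‖⟪x, f i⟫_𝕜‖ ^ 2 = ‖x‖ ^ 2) : ∑ i, ‖f i‖ ^ 2 = finrank 𝕜 H := by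
  let b := stdOrthonormalBasis 𝕜 H
  calc ∑ i, ‖f i‖ ^ 2 = ∑ k, ∑ i, ‖⟪b k, f i⟫_𝕜‖ ^ 2 := by
        rw [sum_comm]
        exact sum_congr rfl fun i _ => (b.sum_sq_norm_inner_right (f i)).symm
    _ = finrank 𝕜 H := by
        simp [hf, b.orthonormal.1]

theorem mul_norm_sq_eq_one_of_equalNorm_parseval [FiniteDimensional 𝕜 H] {r : ℕ}
    (hcard : Fintype.card ι = r * finrank 𝕜 H)
    (hf : ∀ x : H, ∑ i, ‖⟪x, f i⟫_𝕜‖ ^ 2 = ‖x‖ ^ 2) (hequal : ∀ i j, ‖f i‖ = ‖f j‖)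
    (i : ι) : r * ‖f i‖ ^ 2 = 1 := by
  have hN : (finrank 𝕜 H : ℝ) ≠ 0 := by
    have := Fintype.card_pos_iff.2 ⟨i⟩
    rw [hcard] at this
    exact_mod_cast (Nat.pos_of_mul_pos_left this).ne'
  have htotal := sum_norm_sq_eq_finrank_of_parseval hf
  simp only [hequal _ i, sum_const, card_univ, hcard, nsmul_eq_mul, Nat.cast_mul] at htotal
  exact mul_left_cancel₀ hN (by linear_combination htotal)

theorem card_le_mul_finrank_span_of_equalNorm_parseval [FiniteDimensional 𝕜 H] {r : ℕ}
    (hcard : Fintype.card ι = r * finrank 𝕜 H)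
    (hf : ∀ x : H, ∑ i, ‖⟪x, f i⟫_𝕜‖ ^ 2 = ‖x‖ ^ 2) (hequal : ∀ i j, ‖f i‖ = ‖f j‖)
    (s : Finset ι) : #s ≤ r * finrank 𝕜 (span 𝕜 (f '' s)) := by
  have key : (#s : ℝ) ≤ r * finrank 𝕜 (span 𝕜 (f '' s)) := calc
    (#s : ℝ) = ∑ i ∈ s, r * ‖f i‖ ^ 2 := by
      simp [mul_norm_sq_eq_one_of_equalNorm_parseval hcard hf hequal]
    _ = r * ∑ i ∈ s, ‖f i‖ ^ 2 := by rw [mul_sum]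
    _ ≤ r * finrank 𝕜 (span 𝕜 (f '' s)) := by
      gcongr
      exact sum_norm_sq_le_finrank_of_parseval hf _ fun i hi => subset_span ⟨i, hi, rfl⟩
  exact_mod_cast key

end ParsevalFrame

theorem card_fiber_eq_of_card_fiber_le {ι κ : Type*} [Fintype ι] [Fintype κ] [DecidableEq κ]
    (g : ι → κ) {n : ℕ} (hle : ∀ j, #{i | g i = j} ≤ n)
    (hcard : Fintype.card ι = Fintype.card κ * n) (j : κ) : #{i | g i = j} = n := by
  refine (sum_eq_sum_iff_of_le fun j _ => hle j).1 ?_ j (mem_univ j)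
  rw [sum_card_fiberwise_eq_card_filter, sum_const, card_univ, smul_eq_mul, ← hcard]
  simp

/-- An equal-norm Parseval frame of `rN` vectors for an `N`-dimensional
Hilbert space can be partitioned into `r` sets each of which is a linearly independent
spanning set (a basis). -/
theorem equalNorm_parseval_partition_bases
    {H : Type*} [NormedAddCommGroup H] [InnerProductSpace ℂ H] [FiniteDimensional ℂ H]
    (r N : ℕ) (hdim : Module.finrank ℂ H = N)
    (f : Fin (r * N) → H)
    (hParseval : ∀ x : H, ∑ i, ‖⟪x, f i⟫_ℂ‖ ^ 2 = ‖x‖ ^ 2)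
    (hequal : ∀ i j, ‖f i‖ = ‖f j‖) :
    ∃ A : Fin r → Set (Fin (r * N)),
      (⋃ j, A j) = Set.univ ∧ Pairwise (Function.onFun Disjoint A) ∧
      ∀ j, LinearIndependent ℂ ((A j).restrict f) ∧
        Submodule.span ℂ (f '' A j) = ⊤ := by
  classical
  have hcard : Fintype.card (Fin (r * N)) = Fintype.card (Fin r) * finrank ℂ H := by
    simp only [Fintype.card_fin, hdim]
  have hcount := card_le_mul_finrank_span_of_equalNorm_parseval hcard hParseval hequal
  obtain ⟨g, hg⟩ := exists_linearIndepOn_fibers_of_card_le_mul_finrank f hcount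
  have hle (j : Fin r) : #{i | g i = j} ≤ finrank ℂ H := by
    simpa using (hg j).fintype_card_le_finrank
  have hfiber (j : Fin r) : Fintype.card (g ⁻¹' {j}) = finrank ℂ H := by
    simpa using card_fiber_eq_of_card_fiber_le g hle hcard j
  refine ⟨fun j => g ⁻¹' {j}, Set.iUnion_eq_univ_iff.2 fun i => ⟨g i, rfl⟩,
    pairwise_disjoint_fiber g, fun j => ⟨hg j, ?_⟩⟩
  rw [← Set.range_domRestrict]
  exact (hg j).span_eq_top_of_card_eq_finrank' (hfiber j)
end

section
/- Let {f_i}_{i∈I_j}, j = 1, …, r, be linearly independent families of vectors in an N-dimensional Hilbert space H_N, where {I_j}_{j=1}^r partitions an index set I. Suppose there exists another partition {A_j}_{j=1}^r of I such that span{f_i}_{i∈A_j} = H_N for all j. Then span{f_i}_{i∈I_j} = H_N for all j = 1, …, r. -/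
lemma partition_ncard_sum {I : Type*} [Fintype I] {r : ℕ} (S : Fin r → Set I)
    (h1 : (⋃ j, S j) = Set.univ) (h2 : Pairwise (Function.onFun Disjoint S)) :
    ∑ j, (S j).ncard = Fintype.card I := by
  classical
  have hT : ∀ j, (S j).ncard = (S j).toFinset.card := fun j => Set.ncard_eq_toFinset_card' _
  simp only [hT]
  rw [← Finset.card_biUnion]
  · congr 1
    apply Finset.eq_univ_iff_forall.2
    intro x
    have : x ∈ ⋃ j, S j := h1 ▸ Set.mem_univ x
    obtain ⟨j, hj⟩ := Set.mem_iUnion.1 this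
    exact Finset.mem_biUnion.2 ⟨j, Finset.mem_univ _, Set.mem_toFinset.2 hj⟩
  · intro a _ b _ hab
    have := h2 hab
    simp only [Function.onFun] at this
    simpa [Set.disjoint_toFinset] using this

/-- If `{I j}` is a partition of `I` into `r` sets each indexing a linearly
independent family in an `N`-dimensional Hilbert space, and there is another partition
`{A j}` of `I` into `r` spanning sets, then each `{f i : i ∈ I j}` spans. -/
theorem independent_partition_spans
    {H : Type*} [NormedAddCommGroup H] [InnerProductSpace ℂ H] [FiniteDimensional ℂ H]
    {I : Type*} [Fintype I] (r N : ℕ) (hdim : Module.finrank ℂ H = N)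
    (f : I → H) (Ip A : Fin r → Set I)
    (hIpart : (⋃ j, Ip j) = Set.univ ∧ Pairwise (Function.onFun Disjoint Ip))
    (hApart : (⋃ j, A j) = Set.univ ∧ Pairwise (Function.onFun Disjoint A))
    (hindep : ∀ j, LinearIndependent ℂ ((Ip j).restrict f))
    (hspan : ∀ j, Submodule.span ℂ (f '' A j) = ⊤) :
    ∀ j, Submodule.span ℂ (f '' Ip j) = ⊤ := by
  classical
  have hcard : ∀ (s : Set I), Fintype.card ↥s = s.ncard := fun s => by
    rw [← Nat.card_eq_fintype_card, Nat.card_coe_set_eq]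
  have hle : ∀ j, (Ip j).ncard ≤ N := by
    intro j
    have := (hindep j).fintype_card_le_finrank
    rwa [hdim, hcard] at this
  have hge : ∀ j, N ≤ (A j).ncard := by
    intro j
    have h1 : Module.finrank ℂ ↥(Submodule.span ℂ (f '' A j)) ≤ (f '' A j).toFinset.card :=
      finrank_span_le_card _
    rw [hspan j, finrank_top, hdim, ← Set.ncard_eq_toFinset_card'] at h1
    exact h1.trans (Set.ncard_image_le (Set.toFinite _))
  have hsum1 := partition_ncard_sum Ip hIpart.1 hIpart.2
  have hsum2 := partition_ncard_sum A hApart.1 hApart.2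
  have hNle : r * N ≤ ∑ j, (Ip j).ncard := by
    rw [hsum1, ← hsum2]
    calc r * N = ∑ _j : Fin r, N := by simp [mul_comm]
    _ ≤ _ := Finset.sum_le_sum fun j _ => hge j
  have heq : ∀ j, (Ip j).ncard = N := by
    by_contra h
    push_neg at h
    obtain ⟨j0, hj0⟩ := h
    have hlt : (Ip j0).ncard < N := lt_of_le_of_ne (hle j0) hj0
    have : ∑ j, (Ip j).ncard < r * N := by
      calc ∑ j, (Ip j).ncard < ∑ _j : Fin r, N :=
            Finset.sum_lt_sum (fun j _ => hle j) ⟨j0, Finset.mem_univ _, hlt⟩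
      _ = r * N := by simp [mul_comm]
    omega
  intro j
  apply Submodule.eq_top_of_finrank_eq
  rw [hdim]
  have : f '' Ip j = Set.range ((Ip j).restrict f) := (Set.range_restrict f (Ip j)).symm
  rw [this, finrank_span_eq_card (hindep j), hcard, heq j]
end

section
/- Let {f_i}_{i∈I} be a finite family of vectors in a vector space, M ∈ ℕ, and let {I_1, …, I_M} be a partition of I with property (MD). If k ∈ I_p and f_k = ∑_{l∈I_p, l≠k} α_l f_l for some scalars α_l, then f_k lies in span{f_i : i ∈ I_j} for every 1 ≤ j ≤ M. -/
/-- Property (MD) of a partition (see the paper of Bodmann, Casazza, Paulsen, Speegle). -/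
def HasMD (K : Type*) {X : Type*} [Field K] [AddCommGroup X] [Module K X]
    {I : Type*} (f : I → X) (M : ℕ) (P : Fin M → Set I) : Prop :=
  ∀ Q : Fin M → Set I,
    (⋃ j, Q j) = Set.univ → Pairwise (Function.onFun Disjoint Q) →
    (∀ j, Module.finrank K (Submodule.span K (f '' P j)) ≤
        Module.finrank K (Submodule.span K (f '' Q j))) →
    ∀ j, Module.finrank K (Submodule.span K (f '' P j)) =
        Module.finrank K (Submodule.span K (f '' Q j))

/-!
Move `k` from its block `I_p` to the block `I_j`. Since `f k` is spanned by the rest of `I_p`,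
the span of the `p`-th block is unchanged, the `j`-th block can only grow, and all other blocks
stay the same. Property (MD) then forces the span of the `j`-th block not to grow either, so
`f k` already lies in `span {f i : i ∈ I_j}`.
-/

open Function Set Submodule Module

section MoveToBlock

variable {ι α : Type*} [DecidableEq ι]

def moveToBlock (P : ι → Set α) (k : α) (j : ι) : ι → Set α :=
  update (fun i => P i \ {k}) j (insert k (P j))

variable (P : ι → Set α) (k : α) (j : ι)

@[simp]
theorem moveToBlock_self : moveToBlock P k j j = insert k (P j) := by
  simp [moveToBlock]

theorem moveToBlock_of_ne {i : ι} (hij : i ≠ j) : moveToBlock P k j i = P i \ {k} := by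
  simp [moveToBlock, hij]

theorem iUnion_moveToBlock : ⋃ i, moveToBlock P k j i = insert k (⋃ i, P i) := by
  ext x
  simp only [mem_iUnion, mem_insert_iff]
  constructor
  · rintro ⟨i, hi⟩
    by_cases hij : i = j
    · subst hij
      rw [moveToBlock_self] at hi
      exact hi.imp_right (⟨i, ·⟩)
    · rw [moveToBlock_of_ne P k j hij] at hi
      exact Or.inr ⟨i, hi.1⟩
  · rintro (rfl | ⟨i, hi⟩)
    · exact ⟨j, by simp⟩
    by_cases hij : i = j ∨ x = k
    · refine ⟨j, ?_⟩
      rcases hij with rfl | rfl <;> simp [hi]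
    · obtain ⟨hij, hxk⟩ := not_or.mp hij
      exact ⟨i, by simp [moveToBlock_of_ne P k j hij, hi, hxk]⟩

theorem pairwise_disjoint_moveToBlock {P : ι → Set α} (hP : Pairwise (Disjoint on P)) :
    Pairwise (Disjoint on moveToBlock P k j) := by
  intro a b hab
  simp only [onFun, moveToBlock, update_apply]
  have hPab := hP hab
  split_ifs <;> grind

end MoveToBlock

section Span

variable {K X : Type*} [Field K] [AddCommGroup X] [Module K X]

theorem span_image_sdiff_singleton {I : Type*} {f : I → X} {s : Set I} {k : I}
    (hk : f k ∈ span K (f '' (s \ {k}))) :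
    span K (f '' (s \ {k})) = span K (f '' s) := by
  refine le_antisymm (span_mono (image_mono sdiff_subset)) ?_
  rw [← span_insert_eq_span hk, ← image_insert_eq, insert_sdiff_singleton]
  exact span_mono (image_mono (subset_insert k s))

theorem mem_span_of_finrank_span_insert_le [FiniteDimensional K X] {S : Set X} {x : X}
    (h : finrank K (span K (insert x S)) ≤ finrank K (span K S)) : x ∈ span K S := by
  have hspan := eq_of_le_of_finrank_le (span_mono (subset_insert x S)) h
  exact hspan ▸ subset_span (mem_insert x S)

end Span

theorem MD_redundant_mem_span_general
    {K X : Type*} [Field K] [AddCommGroup X] [Module K X] [FiniteDimensional K X]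
    {I : Type*} (f : I → X) (M : ℕ)
    (P : Fin M → Set I)
    (hpart : (⋃ j, P j) = Set.univ ∧ Pairwise (Function.onFun Disjoint P))
    (hMD : HasMD K f M P)
    (p : Fin M) (k : I) (hk : k ∈ P p)
    (hdep : f k ∈ Submodule.span K (f '' (P p \ {k}))) :
    ∀ j, f k ∈ Submodule.span K (f '' P j) := by
  obtain ⟨hcover, hdisj⟩ := hpart
  intro j
  have hk_notMem : ∀ i ≠ p, k ∉ P i := fun i hi hki => disjoint_left.mp (hdisj hi) hki hk
  have hle : ∀ i, finrank K (span K (f '' P i)) ≤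
      finrank K (span K (f '' moveToBlock P k j i)) := by
    intro i
    by_cases hij : i = j
    · subst hij
      rw [moveToBlock_self]
      exact Set.finrank_mono (image_mono (subset_insert k (P i)))
    rw [moveToBlock_of_ne P k j hij]
    by_cases hip : i = p
    · subst hip
      rw [span_image_sdiff_singleton hdep]
    · rw [sdiff_singleton_eq_self (hk_notMem i hip)]
  have hcover_moved : ⋃ i, moveToBlock P k j i = univ := by
    rw [iUnion_moveToBlock, hcover, insert_eq_of_mem (mem_univ k)]
  have hrank := hMD _ hcover_moved (pairwise_disjoint_moveToBlock k j hdisj) hle j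
  apply mem_span_of_finrank_span_insert_le
  rw [← image_insert_eq, ← moveToBlock_self P k j, hrank]

/-- If a partition `{I_j}` of `I` has property (MD), `k ∈ I_p`, and `f k`
is a linear combination of the other vectors indexed by `I_p`, then `f k` lies in the
span of every block of the partition. -/
theorem MD_redundant_mem_span
    {K X : Type*} [Field K] [AddCommGroup X] [Module K X] [FiniteDimensional K X]
    {I : Type*} [Fintype I] (f : I → X) (M : ℕ) (hM : 0 < M)
    (P : Fin M → Set I)
    (hpart : (⋃ j, P j) = Set.univ ∧ Pairwise (Function.onFun Disjoint P))
    (hMD : HasMD K f M P)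
    (p : Fin M) (k : I) (hk : k ∈ P p)
    (hdep : f k ∈ Submodule.span K (f '' (P p \ {k}))) :
    ∀ j, f k ∈ Submodule.span K (f '' P j) :=
  MD_redundant_mem_span_general f M P hpart hMD p k hk hdep
end

section
/- Let {f_i}_{i∈I} be a finite family of vectors in a finite-dimensional vector space X, and suppose (1) I can be partitioned into r+1 sets each indexing a linearly independent family, and (2) I can be partitioned into one set and r further sets each indexing a linearly independent spanning set of X. Then there is a partition {I_1, …, I_{r+1}} of I such that {f_j}_{j∈I_i} is a linearly independent spanning set (a basis of X) for i = 2, …, r+1 and {f_j}_{j∈I_1} is linearly independent. -/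
/-!
Among partitions of `I` into `r + 1` independent parts choose one whose exceptional part `C₀`
is smallest. Call `x` reachable if there is a chain `x = x₀, x₁, …, xₜ` in which each `xₖ` may
replace `xₖ₊₁` in its part `C_j`, `j ≠ 0`, and `xₜ` may be added to some part `C_j`, `j ≠ 0`,
all keeping the part independent. Performing a shortest such chain keeps every part
independent, so by minimality no element of `C₀` is reachable.

Let `R` be the set of reachable elements and `W` the span of the unreachable ones. For `j ≠ 0`
the unreachable elements of `C_j` already span `W`, so `C_j` has at most `dim X - dim W`
elements in `R`, and fewer if `C_j` does not span `X`, while each basis `B_j` needs at least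
`dim X - dim W` of them. As the `B_j` are disjoint and `R` is covered by the `C_j`, `j ≠ 0`, a
non-spanning `C_j` would give the `B_j` more elements of `R` than there are.
-/

section

open Set Submodule Function Module

variable {K X I ι : Type*} [Field K] [AddCommGroup X] [Module K X] {f : I → X}

theorem LinearIndepOn.mem_span_image_sdiff {S D : Set I} {v : X} (hS : LinearIndepOn K f S)
    (hv : v ∈ span K (f '' S)) (h : ∀ y ∈ S ∩ D, v ∈ span K (f '' (S \ {y}))) :
    v ∈ span K (f '' (S \ D)) := by
  rw [Finsupp.mem_span_image_iff_linearCombination] at hv ⊢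
  obtain ⟨l, hlS, rfl⟩ := hv
  refine ⟨l, fun y hy => ⟨hlS hy, fun hyD => Finsupp.mem_support_iff.1 hy ?_⟩, rfl⟩
  obtain ⟨l', hl', hl'l⟩ :=
    (Finsupp.mem_span_image_iff_linearCombination K).1 (h y ⟨hlS hy, hyD⟩)
  rw [← linearIndepOn_iffₛ.1 hS l' (Finsupp.supported_mono sdiff_subset hl') l hlS hl'l]
  exact Finsupp.notMem_support_iff.1 fun hy' => (hl' hy').2 rfl

theorem LinearIndepOn.finrank_span_image_eq_ncard {S : Set I} (hS : LinearIndepOn K f S) :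
    finrank K (span K (f '' S)) = S.ncard := by
  rw [finrank, ← Cardinal.toNat_toENat, toENat_rank_span_set hS]
  rfl

theorem finrank_span_image_le_ncard [Finite I] (A : Set I) :
    finrank K (span K (f '' A)) ≤ A.ncard := by
  have := Fintype.ofFinite (f '' A)
  calc finrank K (span K (f '' A)) ≤ (f '' A).toFinset.card := finrank_span_le_card _
    _ = (f '' A).ncard := (ncard_eq_toFinset_card' _).symm
    _ ≤ A.ncard := ncard_image_le (toFinite A)

theorem span_image_le_of_subset_insert {T U : Set I} {x : I} (hx : f x ∈ span K (f '' T))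
    (hU : U ⊆ insert x T) : span K (f '' U) ≤ span K (f '' T) :=
  span_le.2 <| by
    rintro _ ⟨z, hz, rfl⟩
    rcases hU hz with rfl | hz
    exacts [hx, subset_span (mem_image_of_mem f hz)]

theorem finrank_le_ncard_inter_add_finrank [Finite I] [FiniteDimensional K X] {B R : Set I}
    {W : Submodule K X} (hB : span K (f '' B) = ⊤) (hW : ∀ x ∈ B \ R, f x ∈ W) :
    finrank K X ≤ (B ∩ R).ncard + finrank K W :=
  calc finrank K X = finrank K (span K (f '' B)) := by rw [hB, finrank_top]
    _ ≤ finrank K (span K (f '' (B ∩ R)) ⊔ W : Submodule K X) := by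
        refine Submodule.finrank_mono (span_le.2 ?_)
        rintro _ ⟨x, hx, rfl⟩
        by_cases hxR : x ∈ R
        · exact mem_sup_left (subset_span ⟨x, ⟨hx, hxR⟩, rfl⟩)
        · exact mem_sup_right (hW x ⟨hx, hxR⟩)
    _ ≤ finrank K (span K (f '' (B ∩ R))) + finrank K W :=
        Submodule.finrank_add_le_finrank_add_finrank _ _
    _ ≤ (B ∩ R).ncard + finrank K W := by
        gcongr
        exact finrank_span_image_le_ncard _

theorem ncard_le_sum_ncard_preimage_inter [Fintype ι] (p : I → ι) (R : Set I) :
    R.ncard ≤ ∑ j, (p ⁻¹' {j} ∩ R).ncard := by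
  calc R.ncard = (⋃ j ∈ Finset.univ, p ⁻¹' {j} ∩ R).ncard := by
        congr 1; ext x; simp
    _ ≤ _ := Finset.set_ncard_biUnion_le _ _

theorem sum_ncard_inter_le_ncard [Finite I] [Fintype ι] {B : ι → Set I}
    (hB : Pairwise (Disjoint on B)) (R : Set I) : ∑ j, (B j ∩ R).ncard ≤ R.ncard := by
  rw [← finsum_eq_sum_of_fintype, ← ncard_iUnion_of_finite (fun _ => toFinite _)
    fun i j hij => (hB hij).mono inter_subset_left inter_subset_left]
  exact ncard_le_ncard (iUnion_subset fun _ => inter_subset_right)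

theorem exists_preimage_singleton_eq {A : ι → Set I} (hu : ⋃ j, A j = univ)
    (hd : Pairwise (Disjoint on A)) : ∃ p : I → ι, ∀ j, p ⁻¹' {j} = A j := by
  choose p hp using fun x => mem_iUnion.1 (hu ▸ mem_univ x)
  refine ⟨p, fun j => ext fun x => ⟨fun hx => (hx : p x = j) ▸ hp x, fun hx => ?_⟩⟩
  by_contra hne
  exact disjoint_left.1 (hd hne) (hp x) hx

section update

variable [DecidableEq I]

theorem preimage_update_self (p : I → ι) (x : I) (j : ι) :
    update p x j ⁻¹' {j} = insert x (p ⁻¹' {j}) := by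
  ext z
  by_cases hz : z = x <;> simp [hz]

theorem preimage_update_of_ne (p : I → ι) (x : I) {i j : ι} (h : i ≠ j) :
    update p x j ⁻¹' {i} = p ⁻¹' {i} \ {x} := by
  ext z
  by_cases hz : z = x <;> simp [hz, h.symm]

theorem preimage_update_update_of_ne {p : I → ι} {x y : I} {i j i₀ : ι} (hx : p x = i₀)
    (hy : p y = j) (hi : i ≠ i₀) (hij : i ≠ j) :
    update (update p x j) y i₀ ⁻¹' {i} = p ⁻¹' {i} := by
  ext z
  simp only [mem_preimage, mem_singleton_iff, update_apply]
  split_ifs <;> grind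

theorem preimage_update_update_eq_insert {p : I → ι} {x y : I} {j i₀ : ι} (hxy : x ≠ y)
    (hj : j ≠ i₀) : update (update p x j) y i₀ ⁻¹' {j} = insert x (p ⁻¹' {j} \ {y}) := by
  rw [preimage_update_of_ne _ _ hj, preimage_update_self, insert_sdiff_singleton_comm hxy]

variable {i₀ j : ι} {p : I → ι} {x y : I}

theorem linearIndepOn_preimage_update (hp : ∀ i ≠ i₀, LinearIndepOn K f (p ⁻¹' {i}))
    (hx : f x ∉ span K (f '' (p ⁻¹' {j}))) :
    ∀ i ≠ i₀, LinearIndepOn K f (update p x j ⁻¹' {i}) := by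
  intro i hi
  by_cases hij : i = j
  · subst hij
    rw [preimage_update_self]
    exact (hp i hi).insert hx
  · rw [preimage_update_of_ne p x hij]
    exact (hp i hi).mono sdiff_subset

theorem linearIndepOn_preimage_update_update (hp : ∀ i ≠ i₀, LinearIndepOn K f (p ⁻¹' {i}))
    (hx : p x = i₀) (hy : p y = j) (hj : j ≠ i₀)
    (hexch : f x ∉ span K (f '' (p ⁻¹' {j} \ {y}))) :
    ∀ i ≠ i₀, LinearIndepOn K f (update (update p x j) y i₀ ⁻¹' {i}) := by
  intro i hi
  by_cases hij : i = j
  · subst hij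
    rw [preimage_update_update_eq_insert (by rintro rfl; exact hj (hy.symm.trans hx)) hj]
    exact ((hp i hi).mono sdiff_subset).insert hexch
  · rw [preimage_update_update_of_ne hx hy hi hij]
    exact hp i hi

end update

variable (K f) in
/-- `x` can be added to `S`, or can replace an element of `S ∩ L`, keeping `S` independent. -/
def Escapes (S L : Set I) (x : I) : Prop :=
  f x ∉ span K (f '' S) ∨ ∃ y ∈ S ∩ L, f x ∉ span K (f '' (S \ {y}))

namespace Escapes

variable {S L L' : Set I} {x y z : I}

theorem mono (h : L ⊆ L') (hx : Escapes K f S L x) : Escapes K f S L' x :=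
  hx.imp_right fun ⟨y, ⟨hyS, hyL⟩, hy⟩ => ⟨y, ⟨hyS, h hyL⟩, hy⟩

theorem not_of_mem (hy : y ∈ S) (hyL : y ∉ L) : ¬Escapes K f S L y := by
  rintro (h | ⟨w, ⟨-, hwL⟩, h⟩)
  · exact h (subset_span (mem_image_of_mem f hy))
  · refine h (subset_span (mem_image_of_mem f ⟨hy, ?_⟩))
    rintro rfl
    exact hyL hwL

theorem exchange (hx : ¬Escapes K f S L x) (hy : y ∉ L) (hL : L ⊆ L')
    (hz : Escapes K f S L z) : Escapes K f (insert x (S \ {y})) L' z := by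
  simp only [Escapes, not_or, not_exists, not_and, not_not] at hx
  rcases hz with hz | ⟨w, ⟨hwS, hwL⟩, hz⟩
  · exact Or.inl fun h =>
      hz (span_image_le_of_subset_insert hx.1 (insert_subset_insert sdiff_subset) h)
  · have hwy : w ≠ y := by rintro rfl; exact hy hwL
    refine Or.inr ⟨w, ⟨mem_insert_of_mem _ ⟨hwS, hwy⟩, hL hwL⟩, fun h =>
      hz (span_image_le_of_subset_insert (hx.2 w ⟨hwS, hwL⟩) ?_ h)⟩
    rintro v ⟨rfl | ⟨hvS, -⟩, hvw⟩
    exacts [mem_insert _ _, mem_insert_of_mem _ ⟨hvS, hvw⟩]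

end Escapes

variable (K f) in
/-- Parts are the fibres of `p`; layer `t` consists of the starting points of exchange chains of
length at most `t` that end by adding an element to a part `j ≠ i₀`. -/
def exchangeLayer (i₀ : ι) (p : I → ι) : ℕ → Set I
  | 0 => ∅
  | t + 1 => {x | ∃ j ≠ i₀, Escapes K f (p ⁻¹' {j}) (exchangeLayer i₀ p t) x}

section exchangeLayer

variable {i₀ : ι} {p p' : I → ι}

theorem exchangeLayer_mono : Monotone (exchangeLayer K f i₀ p) := by
  refine monotone_nat_of_le_succ fun t => ?_
  induction t with
  | zero => exact empty_subset _
  | succ t ih => exact fun x ⟨j, hj, hx⟩ => ⟨j, hj, hx.mono ih⟩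

/-- Performing the first exchange of a shortest chain keeps all chains of length at most `s`:
since `x` does not escape part `j` at level `s`, inserting it enlarges none of the spans that
those chains escape. -/
theorem exchangeLayer_subset_of_exchange {j : ι} {x y : I} {s : ℕ}
    (hp' : ∀ i ≠ i₀, i ≠ j → p' ⁻¹' {i} = p ⁻¹' {i})
    (hp'j : p' ⁻¹' {j} = insert x (p ⁻¹' {j} \ {y}))
    (hx : ¬Escapes K f (p ⁻¹' {j}) (exchangeLayer K f i₀ p s) x)
    (hy : y ∉ exchangeLayer K f i₀ p s) :
    ∀ s' ≤ s, exchangeLayer K f i₀ p s' ⊆ exchangeLayer K f i₀ p' s' := by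
  intro s' hs'
  induction s' with
  | zero => exact empty_subset _
  | succ s' ih =>
    have hle : exchangeLayer K f i₀ p s' ⊆ exchangeLayer K f i₀ p s :=
      exchangeLayer_mono (by omega)
    rintro z ⟨i, hi, hz⟩
    refine ⟨i, hi, ?_⟩
    by_cases hij : i = j
    · subst hij
      rw [hp'j]
      exact hz.exchange (fun h => hx (h.mono hle)) (fun h => hy (hle h)) (ih (by omega))
    · rw [hp' i hi hij]
      exact hz.mono (ih (by omega))

theorem mem_exchangeLayer_succ_of_exchange {j : ι} {x y : I} {s : ℕ}
    (hp' : ∀ i ≠ i₀, i ≠ j → p' ⁻¹' {i} = p ⁻¹' {i})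
    (hp'j : p' ⁻¹' {j} = insert x (p ⁻¹' {j} \ {y}))
    (hx : ¬Escapes K f (p ⁻¹' {j}) (exchangeLayer K f i₀ p s) x)
    (hy : y ∉ exchangeLayer K f i₀ p s) (hyj : y ∈ p ⁻¹' {j})
    (hys : y ∈ exchangeLayer K f i₀ p (s + 1)) : y ∈ exchangeLayer K f i₀ p' (s + 1) := by
  obtain ⟨i, hi, hyi⟩ := hys
  have hij : i ≠ j := by
    rintro rfl
    exact Escapes.not_of_mem hyj hy hyi
  refine ⟨i, hi, ?_⟩
  rw [hp' i hi hij]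
  exact hyi.mono (exchangeLayer_subset_of_exchange hp' hp'j hx hy s le_rfl)

theorem exists_augmentation_of_mem_exchangeLayer {x : I} {t : ℕ}
    (hp : ∀ j ≠ i₀, LinearIndepOn K f (p ⁻¹' {j})) (hx : p x = i₀)
    (hxt : x ∈ exchangeLayer K f i₀ p t) :
    ∃ q : I → ι, (∀ j ≠ i₀, LinearIndepOn K f (q ⁻¹' {j})) ∧ q ⁻¹' {i₀} = p ⁻¹' {i₀} \ {x} := by
  classical
  induction t generalizing p x with
  | zero => exact absurd hxt (notMem_empty x)
  | succ t ih =>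
    by_cases hxt' : x ∈ exchangeLayer K f i₀ p t
    · exact ih hp hx hxt'
    obtain ⟨j, hj, hadd | ⟨y, ⟨hyj, hyt⟩, hexch⟩⟩ := hxt
    · exact ⟨update p x j, linearIndepOn_preimage_update hp hadd,
        preimage_update_of_ne p x hj.symm⟩
    obtain ⟨s, rfl⟩ : ∃ s, t = s + 1 :=
      Nat.exists_eq_succ_of_ne_zero (by rintro rfl; exact notMem_empty y hyt)
    have hyj' : p y = j := hyj
    have hyq : y ∈ exchangeLayer K f i₀ (update (update p x j) y i₀) (s + 1) :=
      mem_exchangeLayer_succ_of_exchange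
        (fun i hi hij => preimage_update_update_of_ne hx hyj' hi hij)
        (preimage_update_update_eq_insert (by rintro rfl; exact hj (hyj'.symm.trans hx)) hj)
        (fun h => hxt' ⟨j, hj, h⟩) (fun h => hxt' ⟨j, hj, Or.inr ⟨y, ⟨hyj, h⟩, hexch⟩⟩) hyj hyt
    obtain ⟨q, hq, hq0⟩ :=
      ih (linearIndepOn_preimage_update_update hp hx hyj' hj hexch) (by simp) hyq
    refine ⟨q, hq, ?_⟩
    rw [hq0, preimage_update_self, preimage_update_of_ne _ _ hj.symm,
      insert_sdiff_self_of_notMem]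
    simp [hyj', hj]

theorem mem_span_sdiff_iUnion_exchangeLayer {x : I} {j : ι} (hj : j ≠ i₀)
    (hpj : LinearIndepOn K f (p ⁻¹' {j})) (hx : x ∉ ⋃ t, exchangeLayer K f i₀ p t) :
    f x ∈ span K (f '' (p ⁻¹' {j} \ ⋃ t, exchangeLayer K f i₀ p t)) := by
  have hesc : ∀ t, ¬Escapes K f (p ⁻¹' {j}) (exchangeLayer K f i₀ p t) x :=
    fun t h => hx (mem_iUnion.2 ⟨t + 1, j, hj, h⟩)
  refine hpj.mem_span_image_sdiff (not_not.1 fun h => hesc 0 (Or.inl h)) ?_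
  rintro y ⟨hyj, hy⟩
  obtain ⟨t, hyt⟩ := mem_iUnion.1 hy
  exact not_not.1 fun h => hesc t (Or.inr ⟨y, ⟨hyj, hyt⟩, h⟩)

theorem span_preimage_eq_top_of_forall_mem_span [Finite I] [Fintype ι] [FiniteDimensional K X]
    {B : ι → Set I} {R : Set I} (hp : ∀ j ≠ i₀, LinearIndepOn K f (p ⁻¹' {j}))
    (hBd : Pairwise (Disjoint on B)) (hB : ∀ j ≠ i₀, span K (f '' B j) = ⊤)
    (hR : ∀ x ∈ R, p x ≠ i₀) (hRc : ∀ x ∉ R, ∀ j ≠ i₀, f x ∈ span K (f '' (p ⁻¹' {j} \ R)))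
    {j : ι} (hj : j ≠ i₀) : span K (f '' (p ⁻¹' {j})) = ⊤ := by
  by_contra hne
  set W := span K (f '' Rᶜ)
  have hW : ∀ i ≠ i₀, span K (f '' (p ⁻¹' {i} \ R)) = W := fun i hi =>
    le_antisymm (span_mono (image_mono fun _ hx => hx.2))
      (span_le.2 <| by rintro _ ⟨x, hx, rfl⟩; exact hRc x hx i hi)
  have hfib : ∀ i ≠ i₀, (p ⁻¹' {i} ∩ R).ncard + finrank K W =
      finrank K (span K (f '' (p ⁻¹' {i}))) := fun i hi => by
    rw [← hW i hi, (hp i hi).finrank_span_image_eq_ncard,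
      ((hp i hi).mono sdiff_subset).finrank_span_image_eq_ncard,
      ncard_inter_add_ncard_sdiff_eq_ncard _ _ (toFinite _)]
  have hBR : ∀ i ≠ i₀, finrank K X ≤ (B i ∩ R).ncard + finrank K W := fun i hi =>
    finrank_le_ncard_inter_add_finrank (hB i hi) fun x hx => subset_span ⟨x, hx.2, rfl⟩
  have hlt : ∑ i, (p ⁻¹' {i} ∩ R).ncard < ∑ i, (B i ∩ R).ncard := by
    refine Finset.sum_lt_sum (fun i _ => ?_) ⟨j, Finset.mem_univ _, ?_⟩
    · by_cases hi : i = i₀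
      · subst hi
        rw [show p ⁻¹' {i} ∩ R = ∅ from eq_empty_of_forall_notMem fun x hx => hR x hx.2 hx.1,
          ncard_empty]
        exact Nat.zero_le _
      · have := Submodule.finrank_le (span K (f '' (p ⁻¹' {i})))
        have := hfib i hi
        have := hBR i hi
        omega
    · have := Submodule.finrank_lt hne
      have := hfib j hj
      have := hBR j hj
      omega
  have := sum_ncard_inter_le_ncard hBd R
  have := ncard_le_sum_ncard_preimage_inter p R
  omega

theorem exists_preimage_span_eq_top [Finite I] [Fintype ι] [FiniteDimensional K X]
    {B : ι → Set I} (hp : ∀ j, LinearIndepOn K f (p ⁻¹' {j}))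
    (hBd : Pairwise (Disjoint on B)) (hB : ∀ j ≠ i₀, span K (f '' B j) = ⊤) :
    ∃ q : I → ι, (∀ j, LinearIndepOn K f (q ⁻¹' {j})) ∧
      ∀ j ≠ i₀, span K (f '' (q ⁻¹' {j})) = ⊤ := by
  obtain ⟨q, hq, hmin⟩ := (measure fun q : I → ι => (q ⁻¹' {i₀}).ncard).wf.has_min
    {q | ∀ j, LinearIndepOn K f (q ⁻¹' {j})} ⟨p, hp⟩
  have hR : ∀ x ∈ ⋃ t, exchangeLayer K f i₀ q t, q x ≠ i₀ := by
    intro x hx hx0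
    obtain ⟨t, hxt⟩ := mem_iUnion.1 hx
    obtain ⟨q', hq', hq'0⟩ :=
      exists_augmentation_of_mem_exchangeLayer (fun j _ => hq j) hx0 hxt
    refine hmin q' (fun j => ?_) ?_
    · by_cases hj : j = i₀
      · subst hj
        rw [hq'0]
        exact (hq j).mono sdiff_subset
      · exact hq' j hj
    · show (q' ⁻¹' {i₀}).ncard < (q ⁻¹' {i₀}).ncard
      rw [hq'0]
      exact ncard_sdiff_singleton_lt_of_mem hx0 (toFinite _)
  exact ⟨q, hq, fun j hj => span_preimage_eq_top_of_forall_mem_span (fun i _ => hq i) hBd hB hR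
    (fun x hx i hi => mem_span_sdiff_iUnion_exchangeLayer hi (hq i) hx) hj⟩

end exchangeLayer

end

/-- If a finite family of vectors in a finite-dimensional vector space can
be partitioned into `r + 1` linearly independent sets, and can also be partitioned into
one set and `r` linearly independent spanning sets, then it can be partitioned into one
linearly independent set and `r` bases. -/
theorem partition_independent_and_bases
    {K X : Type*} [Field K] [AddCommGroup X] [Module K X] [FiniteDimensional K X]
    {I : Type*} [Fintype I] (f : I → X) (r : ℕ)
    (h1 : ∃ A : Fin (r + 1) → Set I,
        (⋃ j, A j) = Set.univ ∧ Pairwise (Function.onFun Disjoint A) ∧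
        ∀ j, LinearIndependent K ((A j).restrict f))
    (h2 : ∃ B : Fin (r + 1) → Set I,
        (⋃ j, B j) = Set.univ ∧ Pairwise (Function.onFun Disjoint B) ∧
        ∀ j : Fin (r + 1), j ≠ 0 →
          LinearIndependent K ((B j).restrict f) ∧
          Submodule.span K (f '' B j) = ⊤) :
    ∃ C : Fin (r + 1) → Set I,
      (⋃ j, C j) = Set.univ ∧ Pairwise (Function.onFun Disjoint C) ∧
      LinearIndependent K ((C 0).restrict f) ∧
      ∀ j : Fin (r + 1), j ≠ 0 →
        LinearIndependent K ((C j).restrict f) ∧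
        Submodule.span K (f '' C j) = ⊤ := by
  obtain ⟨A, hAu, hAd, hA⟩ := h1
  obtain ⟨B, -, hBd, hB⟩ := h2
  obtain ⟨p, hp⟩ := exists_preimage_singleton_eq hAu hAd
  obtain ⟨q, hq, hqB⟩ := exists_preimage_span_eq_top (i₀ := 0)
    (fun j => (hp j).symm ▸ hA j) hBd fun j hj => (hB j hj).2
  exact ⟨fun j => q ⁻¹' {j}, Set.eq_univ_of_forall fun x => Set.mem_iUnion.2 ⟨q x, rfl⟩,
    pairwise_disjoint_fiber q, hq 0, fun j hj => ⟨hq j, hqB j hj⟩⟩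
end
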